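/- arXiv:2505.11172 — 10 statements merged into one kernel-verified Lean document; each statement's English description precedes it below -/
import Mathlib

section
/- Let f ∈ K[x,y] be a weakly tame polynomial. Then the K[x,y]-module V_f is freely generated by the Hamiltonian vector field X₀ = (−f_y, f_x) together with one additional element X_* ∈ V_f if and only if f belongs to the Jacobian ideal J(f) = ⟨f_x, f_y⟩ of K[x,y]. -/
open MvPolynomial

/-- `X ∈ V_f`: the pair `X = (P, Q)` defines a polynomial vector field
`P ∂/∂x + Q ∂/∂y` admitting the curve `f = 0` as an invariant curve,
i.e. `P f_x + Q f_y = k f` for some cofactor `k`. -/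
def VfMem {K : Type*} [Field K] (f : MvPolynomial (Fin 2) K)
    (X : MvPolynomial (Fin 2) K × MvPolynomial (Fin 2) K) : Prop :=
  ∃ k : MvPolynomial (Fin 2) K,
    X.1 * pderiv (0 : Fin 2) f + X.2 * pderiv (1 : Fin 2) f = k * f

/-- The `K[x,y]`-module `V_f` is freely generated by `v₀` and `v₁`:
both belong to `V_f`, and every element of `V_f` is a unique
`K[x,y]`-linear combination of `v₀` and `v₁`. -/
def FreelyGen {K : Type*} [Field K] (f : MvPolynomial (Fin 2) K)
    (v₀ v₁ : MvPolynomial (Fin 2) K × MvPolynomial (Fin 2) K) : Prop :=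
  VfMem f v₀ ∧ VfMem f v₁ ∧
    ∀ w, VfMem f w →
      ∃! c : MvPolynomial (Fin 2) K × MvPolynomial (Fin 2) K,
        w = c.1 • v₀ + c.2 • v₁

/-!
The map `(P, Q) ↦ P f_x + Q f_y` sends `X₀` to `0`, and `V_f` is the preimage of `(f)`.
Finite codimension of `J(f)` puts a nonzero polynomial in `x` alone and one in `y` alone into
`J(f)`; a common factor of `f_x` and `f_y` divides both, so it is constant. Hence `f_x, f_y` are
coprime and their syzygies are exactly the multiples of `X₀`.

If `f = a f_x + b f_y`, then `(a, b)` has cofactor `1`, and any `X ∈ V_f` with cofactor `k`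
differs from `k • (a, b)` by a syzygy, i.e. by a multiple of `X₀`. Conversely, if `X₀, X_*`
generate `V_f`, expressing `(f, 0)` and `(0, f)` shows that the cofactor of `X_*` divides `f_x`
and `f_y`; so it is a unit and `X_*` writes `f` as an element of `J(f)`.
-/

theorem IsRelPrime.exists_eq_smul_of_mul_add_mul_eq_zero {R : Type*} [CommRing R] [IsDomain R]
    [DecompositionMonoid R] {u v a b : R} (huv : IsRelPrime u v) (h : a * u + b * v = 0) :
    ∃ c : R, (a, b) = c • (-v, u) := by
  obtain ⟨e, rfl⟩ : v ∣ a := huv.symm.dvd_of_dvd_mul_right ⟨-b, by linear_combination h⟩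
  rcases eq_or_ne v 0 with rfl | hv
  · obtain ⟨w, rfl⟩ := isRelPrime_zero_right.mp huv
    exact ⟨b * ↑w⁻¹, by simp [mul_assoc]⟩
  · have hb : b = -(e * u) := by
      have : v * (e * u + b) = 0 := by linear_combination h
      linear_combination (mul_eq_zero.mp this).resolve_left hv
    exact ⟨-e, by simp [hb, mul_comm]⟩

theorem Polynomial.degreeOf_toMvPolynomial_of_ne {R σ : Type*} [CommSemiring R] {i j : σ}
    (hji : j ≠ i) (p : Polynomial R) : degreeOf j (p.toMvPolynomial i) = 0 := by
  classical
  by_contra h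
  have hj : j ∈ (p.toMvPolynomial i).vars := mem_vars_iff_degreeOf_ne_zero.mpr h
  rw [Polynomial.toMvPolynomial_eq_rename_comp] at hj
  obtain ⟨_, -, rfl⟩ := Finset.mem_image.mp (vars_rename _ _ hj)
  exact hji rfl

theorem MvPolynomial.exists_toMvPolynomial_mem_of_finiteDimensional {K σ : Type*} [Field K]
    {J : Ideal (MvPolynomial σ K)} (hJ : FiniteDimensional K (MvPolynomial σ K ⧸ J)) (i : σ) :
    ∃ p : Polynomial K, p ≠ 0 ∧ p.toMvPolynomial i ∈ J := by
  have hint : IsIntegral K (Ideal.Quotient.mkₐ K J (X i)) := .of_finite K _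
  refine ⟨minpoly K (Ideal.Quotient.mkₐ K J (X i)), minpoly.ne_zero hint, ?_⟩
  rw [← Ideal.Quotient.eq_zero_iff_mem, ← Ideal.Quotient.mkₐ_eq_mk K,
    Polynomial.toMvPolynomial, ← Polynomial.aeval_algHom_apply, minpoly.aeval]

theorem MvPolynomial.degreeOf_eq_zero_of_dvd_toMvPolynomial {R σ : Type*} [CommRing R]
    [IsDomain R] {i j : σ} (hji : j ≠ i) {d : MvPolynomial σ R} {p : Polynomial R}
    (hp : p ≠ 0) (hd : d ∣ p.toMvPolynomial i) : degreeOf j d = 0 := by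
  obtain ⟨e, he⟩ := hd
  have hde : d * e ≠ 0 :=
    he ▸ (map_ne_zero_iff _ (Polynomial.toMvPolynomial_injective i)).mpr hp
  have := Polynomial.degreeOf_toMvPolynomial_of_ne hji p
  rw [he, degreeOf_mul_eq (left_ne_zero_of_mul hde) (right_ne_zero_of_mul hde)] at this
  omega

theorem MvPolynomial.isUnit_of_le_span_singleton_of_finiteDimensional {K σ : Type*} [Field K]
    [Nontrivial σ] {J : Ideal (MvPolynomial σ K)}
    (hJ : FiniteDimensional K (MvPolynomial σ K ⧸ J))
    {d : MvPolynomial σ K} (hd : J ≤ Ideal.span {d}) : IsUnit d := by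
  have hdvd (i : σ) : ∃ p : Polynomial K, p ≠ 0 ∧ d ∣ p.toMvPolynomial i := by
    obtain ⟨p, hp, hpJ⟩ := exists_toMvPolynomial_mem_of_finiteDimensional hJ i
    exact ⟨p, hp, Ideal.mem_span_singleton.mp (hd hpJ)⟩
  have hvars : d.vars = ∅ := Finset.eq_empty_of_forall_notMem fun j hj ↦ by
    obtain ⟨i, hij⟩ := exists_ne j
    obtain ⟨p, hp, hpd⟩ := hdvd i
    exact mem_vars_iff_degreeOf_ne_zero.mp hj
      (degreeOf_eq_zero_of_dvd_toMvPolynomial hij.symm hp hpd)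
  obtain ⟨p, hp, hpd⟩ := hdvd (Classical.arbitrary σ)
  have hd0 : d ≠ 0 := by
    rintro rfl
    exact hp (Polynomial.toMvPolynomial_injective _ (by simpa using hpd))
  rw [vars_eq_empty_iff_eq_C.mp hvars] at hd0 ⊢
  exact (isUnit_iff_ne_zero.mpr fun h ↦ hd0 (by rw [h, map_zero])).map C

theorem MvPolynomial.isRelPrime_of_finiteDimensional_quotient_span_pair {K σ : Type*} [Field K]
    [Nontrivial σ] {a b : MvPolynomial σ K}
    (h : FiniteDimensional K (MvPolynomial σ K ⧸ Ideal.span {a, b})) : IsRelPrime a b :=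
  fun _ hda hdb ↦ isUnit_of_le_span_singleton_of_finiteDimensional h <| Ideal.span_le.mpr <| by
    rintro _ (rfl | rfl)
    exacts [Ideal.mem_span_singleton.mpr hda, Ideal.mem_span_singleton.mpr hdb]

section InvariantCurve

variable {K : Type*} [Field K] {f : MvPolynomial (Fin 2) K}

theorem vfMem_hamiltonian (f : MvPolynomial (Fin 2) K) :
    VfMem f (-(pderiv (1 : Fin 2) f), pderiv (0 : Fin 2) f) :=
  ⟨0, by ring⟩

theorem ne_zero_of_isRelPrime_pderiv (h : IsRelPrime (pderiv (0 : Fin 2) f) (pderiv 1 f)) :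
    f ≠ 0 := by
  rintro rfl
  simp [not_isRelPrime_zero_zero] at h

theorem cofactor_eq_of_eq_smul_hamiltonian_add_smul (hf : f ≠ 0)
    {X w : MvPolynomial (Fin 2) K × MvPolynomial (Fin 2) K}
    {k m c₀ c₁ : MvPolynomial (Fin 2) K}
    (hX : X.1 * pderiv 0 f + X.2 * pderiv 1 f = k * f)
    (hw : w.1 * pderiv 0 f + w.2 * pderiv 1 f = m * f)
    (h : w = c₀ • (-(pderiv 1 f), pderiv 0 f) + c₁ • X) : m = c₁ * k := by
  refine mul_right_cancel₀ hf ?_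
  rw [← hw, h, mul_assoc, ← hX]
  simp only [Prod.fst_add, Prod.snd_add, Prod.smul_fst, Prod.smul_snd, smul_eq_mul]
  ring

theorem mem_span_pderiv_of_freelyGen (hcop : IsRelPrime (pderiv (0 : Fin 2) f) (pderiv 1 f))
    {X : MvPolynomial (Fin 2) K × MvPolynomial (Fin 2) K}
    (hX : FreelyGen f (-(pderiv 1 f), pderiv 0 f) X) :
    f ∈ Ideal.span {pderiv 0 f, pderiv 1 f} := by
  obtain ⟨-, ⟨k, hk⟩, hgen⟩ := hX
  have hf := ne_zero_of_isRelPrime_pderiv hcop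
  have hdvd {w : MvPolynomial (Fin 2) K × MvPolynomial (Fin 2) K} {m : MvPolynomial (Fin 2) K}
      (hw : w.1 * pderiv 0 f + w.2 * pderiv 1 f = m * f) : k ∣ m := by
    obtain ⟨c, hc, -⟩ := hgen w ⟨m, hw⟩
    exact ⟨c.2, by rw [cofactor_eq_of_eq_smul_hamiltonian_add_smul hf hk hw hc, mul_comm]⟩
  have hunit : IsUnit k :=
    hcop (hdvd (w := (f, 0)) (by ring)) (hdvd (w := (0, f)) (by ring))
  rw [← Ideal.unit_mul_mem_iff_mem _ hunit, ← hk]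
  exact Ideal.add_mem _ (Ideal.mul_mem_left _ _ (Ideal.subset_span (by simp)))
    (Ideal.mul_mem_left _ _ (Ideal.subset_span (by simp)))

theorem freelyGen_of_mul_pderiv_add_mul_pderiv_eq
    (hcop : IsRelPrime (pderiv (0 : Fin 2) f) (pderiv 1 f))
    {a b : MvPolynomial (Fin 2) K} (hab : a * pderiv 0 f + b * pderiv 1 f = f) :
    FreelyGen f (-(pderiv 1 f), pderiv 0 f) (a, b) := by
  have hf := ne_zero_of_isRelPrime_pderiv hcop
  refine ⟨vfMem_hamiltonian f, ⟨1, by rw [hab, one_mul]⟩, ?_⟩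
  intro w ⟨k, hk⟩
  have hsyz : (w.1 - k * a) * pderiv 0 f + (w.2 - k * b) * pderiv 1 f = 0 := by
    linear_combination hk - k * hab
  obtain ⟨c₀, hc₀⟩ := hcop.exists_eq_smul_of_mul_add_mul_eq_zero hsyz
  replace hc₀ : w - k • (a, b) = c₀ • (-(pderiv 1 f), pderiv 0 f) := hc₀
  refine ⟨(c₀, k), sub_eq_iff_eq_add.mp hc₀, ?_⟩
  rintro ⟨c₀', k'⟩ hc
  obtain rfl : k' = k := by
    simpa using (cofactor_eq_of_eq_smul_hamiltonian_add_smul hf (X := (a, b))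
      (hab.trans (one_mul f).symm) hk hc).symm
  have hX₀ : ((-(pderiv 1 f), pderiv 0 f) : MvPolynomial (Fin 2) K × _) ≠ 0 := by
    intro h
    simp only [Prod.mk_eq_zero, neg_eq_zero] at h
    exact not_isRelPrime_zero_zero (h.2 ▸ h.1 ▸ hcop)
  congr
  refine smul_left_injective _ hX₀ (show c₀' • _ = c₀ • _ from ?_)
  rw [← hc₀, hc, add_sub_cancel_right]

end InvariantCurve

theorem stmt0_general (K : Type*) [Field K]
    (f : MvPolynomial (Fin 2) K)
    (hwt : FiniteDimensional K
      (MvPolynomial (Fin 2) K ⧸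
        Ideal.span {pderiv (0 : Fin 2) f, pderiv (1 : Fin 2) f})) :
    (∃ Xstar, FreelyGen f (-(pderiv (1 : Fin 2) f), pderiv (0 : Fin 2) f) Xstar) ↔
      f ∈ Ideal.span {pderiv (0 : Fin 2) f, pderiv (1 : Fin 2) f} := by
  have hcop := isRelPrime_of_finiteDimensional_quotient_span_pair hwt
  refine ⟨fun ⟨_, hX⟩ ↦ mem_span_pderiv_of_freelyGen hcop hX, fun hf ↦ ?_⟩
  obtain ⟨a, b, hab⟩ := Ideal.mem_span_pair.mp hf
  exact ⟨(a, b), freelyGen_of_mul_pderiv_add_mul_pderiv_eq hcop hab⟩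

/-- For a weakly tame `f ∈ K[x,y]`, the module `V_f` is freely
generated by the Hamiltonian vector field `X₀ = (-f_y, f_x)` together with one
additional element `X_* ∈ V_f` iff `f ∈ J(f) = ⟨f_x, f_y⟩`. -/
theorem stmt0 (K : Type*) [Field K] [Algebra K ℂ]
    (f : MvPolynomial (Fin 2) K)
    (hwt : FiniteDimensional K
      (MvPolynomial (Fin 2) K ⧸
        Ideal.span {pderiv (0 : Fin 2) f, pderiv (1 : Fin 2) f})) :
    (∃ Xstar, FreelyGen f (-(pderiv (1 : Fin 2) f), pderiv (0 : Fin 2) f) Xstar) ↔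
      f ∈ Ideal.span {pderiv (0 : Fin 2) f, pderiv (1 : Fin 2) f} :=
  stmt0_general K f hwt
end

section
/- Let f ∈ K[x,y] be a weakly tame polynomial and suppose f = P_* f_x + Q_* f_y for some P_*, Q_* ∈ K[x,y]. Then the K[x,y]-module V_f is freely generated by the two elements X₀ = (−f_y, f_x) and X_* = (P_*, Q_*); in particular X_* ∈ V_f with cofactor 1. -/
open MvPolynomial

section Aux

variable {K : Type*} [Field K]

private lemma deg0_dvd {z w : MvPolynomial (Fin 2) K} (h : z ∣ w) (hw : w ≠ 0)
    (hd : degreeOf 0 w = 0) : degreeOf 0 z = 0 := by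
  have h2 : finSuccEquiv K 1 z ∣ finSuccEquiv K 1 w := map_dvd _ h
  have hw2 : finSuccEquiv K 1 w ≠ 0 :=
    (map_ne_zero_iff _ (AlgEquiv.injective _)).2 hw
  have h3 := Polynomial.natDegree_le_of_dvd h2 hw2
  rw [natDegree_finSuccEquiv, natDegree_finSuccEquiv, hd, Nat.le_zero] at h3
  exact h3

private lemma deg1_dvd {z w : MvPolynomial (Fin 2) K} (h : z ∣ w) (hw : w ≠ 0)
    (hd : degreeOf 1 w = 0) : degreeOf 1 z = 0 := by
  have hswap : Function.Injective (Equiv.swap (0 : Fin 2) 1) := (Equiv.swap _ _).injective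
  have h2 : rename (Equiv.swap (0 : Fin 2) 1) z ∣ rename (Equiv.swap (0 : Fin 2) 1) w :=
    map_dvd _ h
  have hw2 : rename (Equiv.swap (0 : Fin 2) 1) w ≠ 0 := by
    intro h0
    exact hw (rename_injective _ hswap (by simpa using h0))
  have e1 := degreeOf_rename_of_injective (p := z) hswap 1
  have e2 := degreeOf_rename_of_injective (p := w) hswap 1
  rw [Equiv.swap_apply_right] at e1 e2
  rw [← e1]
  exact deg0_dvd h2 hw2 (by rw [e2, hd])

private lemma degreeOf_aeval_X1 (q : Polynomial K) :
    degreeOf 0 (Polynomial.aeval (X 1 : MvPolynomial (Fin 2) K) q) = 0 := by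
  rw [← natDegree_finSuccEquiv]
  have h1 : (finSuccEquiv K 1) (Polynomial.aeval (X 1 : MvPolynomial (Fin 2) K) q)
      = Polynomial.aeval ((finSuccEquiv K 1) (X 1)) q :=
    (Polynomial.aeval_algHom_apply (finSuccEquiv K 1) (X 1) q).symm
  have h2 : (finSuccEquiv K 1) (X 1 : MvPolynomial (Fin 2) K)
      = Polynomial.C (X 0 : MvPolynomial (Fin 1) K) := by
    have : (1 : Fin 2) = Fin.succ 0 := rfl
    rw [this, finSuccEquiv_X_succ]
  have h3 : Polynomial.aeval (Polynomial.C (X 0 : MvPolynomial (Fin 1) K)) q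
      = Polynomial.C (Polynomial.aeval (X 0 : MvPolynomial (Fin 1) K) q) := by
    have h := Polynomial.aeval_algHom_apply (Polynomial.CAlgHom
      (R := K) (A := MvPolynomial (Fin 1) K)) (X 0) q
    simpa [Polynomial.CAlgHom_apply] using h
  rw [h1, h2, h3, Polynomial.natDegree_C]

private lemma degreeOf_aeval_X0 (p : Polynomial K) :
    degreeOf 1 (Polynomial.aeval (X 0 : MvPolynomial (Fin 2) K) p) = 0 := by
  have hswap : Function.Injective (Equiv.swap (0 : Fin 2) 1) := (Equiv.swap _ _).injective
  have h := degreeOf_rename_of_injective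
    (p := Polynomial.aeval (X 0 : MvPolynomial (Fin 2) K) p) hswap 1
  rw [Equiv.swap_apply_right] at h
  rw [← h]
  have h2 : rename (Equiv.swap (0 : Fin 2) 1) (Polynomial.aeval (X 0 : MvPolynomial (Fin 2) K) p)
      = Polynomial.aeval (X 1 : MvPolynomial (Fin 2) K) p := by
    rw [← Polynomial.aeval_algHom_apply (rename (Equiv.swap (0 : Fin 2) 1))]
    rw [rename_X, Equiv.swap_apply_left]
  rw [h2]
  exact degreeOf_aeval_X1 p

private lemma eq_C_of_deg {z : MvPolynomial (Fin 2) K} (h0 : degreeOf 0 z = 0)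
    (h1 : degreeOf 1 z = 0) : z = C (coeff 0 z) := by
  ext m
  rcases eq_or_ne m 0 with rfl | hm
  · simp
  · rw [coeff_C, if_neg (by simpa using (Ne.symm hm))]
    by_contra hc
    have hms : m ∈ z.support := by rwa [mem_support_iff]
    have hm0 : m 0 = 0 := Nat.le_zero.mp (h0 ▸ monomial_le_degreeOf 0 hms)
    have hm1 : m 1 = 0 := Nat.le_zero.mp (h1 ▸ monomial_le_degreeOf 1 hms)
    apply hm
    ext i
    fin_cases i
    · simpa using hm0
    · simpa using hm1

private lemma relPrime (f : MvPolynomial (Fin 2) K)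
    (hwt : FiniteDimensional K
      (MvPolynomial (Fin 2) K ⧸
        Ideal.span {pderiv (0 : Fin 2) f, pderiv (1 : Fin 2) f})) :
    IsRelPrime (pderiv (0 : Fin 2) f) (pderiv (1 : Fin 2) f) := by
  set J : Ideal (MvPolynomial (Fin 2) K) :=
    Ideal.span {pderiv (0 : Fin 2) f, pderiv (1 : Fin 2) f} with hJ
  have hx : IsIntegral K (Ideal.Quotient.mk J (X 0)) := IsIntegral.of_finite K _
  have hy : IsIntegral K (Ideal.Quotient.mk J (X 1)) := IsIntegral.of_finite K _
  obtain ⟨p, pmonic, hp⟩ := hx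
  obtain ⟨q, qmonic, hq⟩ := hy
  have hpJ : Polynomial.aeval (X 0 : MvPolynomial (Fin 2) K) p ∈ J := by
    have h := Polynomial.aeval_algHom_apply (Ideal.Quotient.mkₐ K J) (X 0) p
    rw [Ideal.Quotient.mkₐ_eq_mk] at h
    rw [← Ideal.Quotient.eq_zero_iff_mem, ← h]
    simpa [Polynomial.aeval_def] using hp
  have hqJ : Polynomial.aeval (X 1 : MvPolynomial (Fin 2) K) q ∈ J := by
    have h := Polynomial.aeval_algHom_apply (Ideal.Quotient.mkₐ K J) (X 1) q
    rw [Ideal.Quotient.mkₐ_eq_mk] at h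
    rw [← Ideal.Quotient.eq_zero_iff_mem, ← h]
    simpa [Polynomial.aeval_def] using hq
  have hA0 : Polynomial.aeval (X 0 : MvPolynomial (Fin 2) K) p ≠ 0 := by
    intro h
    have h2 := congrArg (aeval (fun _ : Fin 2 => (Polynomial.X : Polynomial K))) h
    rw [← Polynomial.aeval_algHom_apply
      (aeval (R := K) (fun _ : Fin 2 => (Polynomial.X : Polynomial K))), aeval_X,
      Polynomial.aeval_X_left_apply, map_zero] at h2
    exact pmonic.ne_zero h2
  have hB0 : Polynomial.aeval (X 1 : MvPolynomial (Fin 2) K) q ≠ 0 := by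
    intro h
    have h2 := congrArg (aeval (fun _ : Fin 2 => (Polynomial.X : Polynomial K))) h
    rw [← Polynomial.aeval_algHom_apply
      (aeval (R := K) (fun _ : Fin 2 => (Polynomial.X : Polynomial K))), aeval_X,
      Polynomial.aeval_X_left_apply, map_zero] at h2
    exact qmonic.ne_zero h2
  intro z hzx hzy
  have hzJ : ∀ w ∈ J, z ∣ w := by
    intro w hw
    rw [hJ, Ideal.mem_span_pair] at hw
    obtain ⟨u, v, huv⟩ := hw
    rw [← huv]
    exact dvd_add (hzx.mul_left u) (hzy.mul_left v)
  have hzA := hzJ _ hpJ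
  have hzB := hzJ _ hqJ
  have d1 : degreeOf 1 z = 0 := deg1_dvd hzA hA0 (degreeOf_aeval_X0 p)
  have d0 : degreeOf 0 z = 0 := deg0_dvd hzB hB0 (degreeOf_aeval_X1 q)
  have hzC := eq_C_of_deg d0 d1
  have hz0 : z ≠ 0 := by
    rintro rfl
    exact hA0 (zero_dvd_iff.mp hzA)
  have hcoeff : coeff 0 z ≠ 0 := by
    intro h
    apply hz0
    rw [hzC, h, map_zero]
  rw [hzC]
  exact (isUnit_iff_ne_zero.mpr hcoeff).map C

private lemma syzygy {fx fy A B : MvPolynomial (Fin 2) K} (hrel : IsRelPrime fx fy)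
    (h : A * fx + B * fy = 0) : ∃ a, A = a * -fy ∧ B = a * fx := by
  by_cases hfy : fy = 0
  · subst hfy
    obtain ⟨u, rfl⟩ := hrel dvd_rfl (dvd_zero fx)
    have hA : A = 0 := by
      have h2 : A * (u : MvPolynomial (Fin 2) K) = 0 := by linear_combination h
      exact (Units.mul_left_eq_zero u).mp h2
    refine ⟨B * (↑u⁻¹ : MvPolynomial (Fin 2) K), by rw [hA]; ring, ?_⟩
    rw [mul_assoc, Units.inv_mul, mul_one]
  · have hdvd : fy ∣ A * fx := ⟨-B, by linear_combination h⟩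
    obtain ⟨t, ht⟩ := hrel.symm.dvd_of_dvd_mul_right hdvd
    refine ⟨-t, by rw [ht]; ring, ?_⟩
    have h2 : fy * (t * fx + B) = 0 := by linear_combination h - fx * ht
    rcases mul_eq_zero.mp h2 with h3 | h3
    · exact absurd h3 hfy
    · linear_combination h3

end Aux

/-- If `f ∈ K[x,y]` is weakly tame and `f = P_* f_x + Q_* f_y`,
then `V_f` is freely generated by `X₀ = (-f_y, f_x)` and `X_* = (P_*, Q_*)`;
in particular `X_* ∈ V_f` with cofactor `1`. -/
theorem stmt1 (K : Type*) [Field K] [Algebra K ℂ]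
    (f : MvPolynomial (Fin 2) K)
    (hwt : FiniteDimensional K
      (MvPolynomial (Fin 2) K ⧸
        Ideal.span {pderiv (0 : Fin 2) f, pderiv (1 : Fin 2) f}))
    (Pstar Qstar : MvPolynomial (Fin 2) K)
    (hdec : f = Pstar * pderiv (0 : Fin 2) f + Qstar * pderiv (1 : Fin 2) f) :
    (Pstar * pderiv (0 : Fin 2) f + Qstar * pderiv (1 : Fin 2) f = 1 * f) ∧
      FreelyGen f (-(pderiv (1 : Fin 2) f), pderiv (0 : Fin 2) f) (Pstar, Qstar) := by
  have hrel := relPrime f hwt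
  have hXunit : ¬ IsUnit (X 0 : MvPolynomial (Fin 2) K) := by
    intro h
    have h2 := h.map (finSuccEquiv K 1)
    rw [finSuccEquiv_X_zero] at h2
    exact Polynomial.not_isUnit_X h2
  have hnz : ¬(pderiv (0 : Fin 2) f = 0 ∧ pderiv (1 : Fin 2) f = 0) := by
    rintro ⟨h1, h2⟩
    exact hXunit (hrel (by rw [h1]; exact dvd_zero _) (by rw [h2]; exact dvd_zero _))
  have hf0 : f ≠ 0 := by
    rintro rfl
    exact hnz ⟨map_zero _, map_zero _⟩
  refine ⟨by rw [one_mul]; exact hdec.symm, ⟨0, by ring⟩, ⟨1, by rw [one_mul]; exact hdec.symm⟩, ?_⟩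
  intro w hw
  obtain ⟨k, hk⟩ := hw
  have hsyz : (w.1 - k * Pstar) * pderiv (0 : Fin 2) f
      + (w.2 - k * Qstar) * pderiv (1 : Fin 2) f = 0 := by
    linear_combination hk + k * hdec
  obtain ⟨a, ha1, ha2⟩ := syzygy hrel hsyz
  have h1 : w.1 = a * -(pderiv (1 : Fin 2) f) + k * Pstar := by linear_combination ha1
  have h2 : w.2 = a * pderiv (0 : Fin 2) f + k * Qstar := by linear_combination ha2
  have hex : w = (a, k).1 • (-(pderiv (1 : Fin 2) f), pderiv (0 : Fin 2) f)
      + (a, k).2 • (Pstar, Qstar) := by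
    rw [Prod.ext_iff]
    constructor
    · simpa [smul_eq_mul] using h1
    · simpa [smul_eq_mul] using h2
  refine ⟨(a, k), hex, ?_⟩
  · rintro ⟨c1, c2⟩ hc
    replace hc : w = (c1, c2).1 • (-(pderiv (1 : Fin 2) f), pderiv (0 : Fin 2) f)
      + (c1, c2).2 • (Pstar, Qstar) := hc
    rw [Prod.ext_iff] at hc
    obtain ⟨hca, hcb⟩ := hc
    have e1 : w.1 = c1 * -(pderiv (1 : Fin 2) f) + c2 * Pstar := by
      simpa [smul_eq_mul] using hca
    have e2 : w.2 = c1 * pderiv (0 : Fin 2) f + c2 * Qstar := by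
      simpa [smul_eq_mul] using hcb
    have key : (c2 - k) * f = 0 := by
      linear_combination (c2 - k) * hdec + pderiv (0 : Fin 2) f * h1
        - pderiv (0 : Fin 2) f * e1 + pderiv (1 : Fin 2) f * h2 - pderiv (1 : Fin 2) f * e2
    have hc2 : c2 = k := by
      rcases mul_eq_zero.mp key with h3 | h3
      · exact sub_eq_zero.mp h3
      · exact absurd h3 hf0
    subst hc2
    have t1 : (c1 - a) * pderiv (0 : Fin 2) f = 0 := by linear_combination h2 - e2
    have t2 : (c1 - a) * pderiv (1 : Fin 2) f = 0 := by linear_combination e1 - h1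
    have hc1 : c1 = a := by
      rcases eq_or_ne (pderiv (0 : Fin 2) f) 0 with hx | hx
      · have hy : pderiv (1 : Fin 2) f ≠ 0 := fun hy => hnz ⟨hx, hy⟩
        rcases mul_eq_zero.mp t2 with h3 | h3
        · exact sub_eq_zero.mp h3
        · exact absurd h3 hy
      · rcases mul_eq_zero.mp t1 with h3 | h3
        · exact sub_eq_zero.mp h3
        · exact absurd h3 hx
    rw [Prod.ext_iff]
    exact ⟨hc1, rfl⟩
end

section
/- Let f ∈ K[x,y] be a weakly tame polynomial and let l, m be nonnegative integers. Then there exists a positive integer d such that f is quasi-homogeneous of degree d with weights (l,m) if and only if the K[x,y]-module V_f is freely generated by the Hamiltonian vector field X₀ = (−f_y, f_x) and the vector field X_* = (l·x, m·y). -/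
open MvPolynomial

/-!
Weak tameness makes `f_x` and `f_y` coprime: a common factor `p` leaves a finite-dimensional
quotient `K[x,y]/(p)`, in which `x` and `y` are algebraic over `K`, and this forces `p` to be
constant.

If `f` is quasi-homogeneous of degree `d > 0`, Euler's identity `X_* · ∇f = d f` puts `X_*` in
`V_f` with a unit cofactor. For `w ∈ V_f` with cofactor `k`, `d w - k X_*` is a syzygy of the
coprime pair `(f_x, f_y)`, hence a multiple of `X₀`; and `X₀, X_*` are independent because
`X₀ · ∇f = 0 ≠ d f = X_* · ∇f`.

Conversely, let `X_* · ∇f = k f`. Under `x ↦ T^l x, y ↦ T^m y` the Euler operator `X_* · ∇`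
becomes `T d/dT`, which does not raise the `T`-degree, so the image of `k` is constant in `T`,
and comparing `T`-coefficients shows that every weighted component of `f` has weighted degree
equal to that constant. The degree cannot be `0`: then both generators would annihilate `∇f`,
whereas `(f, 0)` and `(0, f)` lie in `V_f`.
-/

lemma Polynomial.prod_monomial {ι S : Type*} [CommSemiring S] (I : Finset ι) (n : ι → ℕ)
    (a : ι → S) :
    ∏ i ∈ I, Polynomial.monomial (n i) (a i) =
      Polynomial.monomial (∑ i ∈ I, n i) (∏ i ∈ I, a i) := by
  classical
  induction I using Finset.induction_on with
  | empty => simp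
  | insert i I hi ih =>
    simp [Finset.prod_insert hi, Finset.sum_insert hi, ih, Polynomial.monomial_mul_monomial]

namespace MvPolynomial

section WeightedEuler

variable {R σ : Type*} (w : σ → ℕ)

lemma coeff_sum_weight_X_mul_pderiv [CommSemiring R] [Fintype σ] (p : MvPolynomial σ R)
    (s : σ →₀ ℕ) :
    coeff s (∑ i, w i • (X i * pderiv i p)) = Finsupp.weight w s • coeff s p := by
  induction p using MvPolynomial.induction_on' with
  | monomial t c =>
    classical
    simp only [X_mul_pderiv_monomial, smul_smul, ← Finset.sum_smul, coeff_smul, coeff_monomial]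
    split_ifs with h
    · subst h
      rw [Finsupp.weight_apply, Finsupp.sum_fintype _ _ (by simp)]
      simp only [smul_eq_mul, mul_comm]
    · simp
  | add p q hp hq =>
    simp only [map_add, mul_add, smul_add, Finset.sum_add_distrib, coeff_add, hp, hq]

lemma weightedHomogeneousComponent_sum_weight_X_mul_pderiv [CommSemiring R] [Fintype σ]
    (p : MvPolynomial σ R) (n : ℕ) :
    weightedHomogeneousComponent w n (∑ i, w i • (X i * pderiv i p)) =
      n • weightedHomogeneousComponent w n p := by
  ext s
  simp only [coeff_weightedHomogeneousComponent, coeff_sum_weight_X_mul_pderiv, coeff_smul]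
  split_ifs with h
  · rw [h]
  · simp

lemma weightedHomogeneousComponent_weight_ne_zero [CommSemiring R] {p : MvPolynomial σ R}
    {s : σ →₀ ℕ} (hs : s ∈ p.support) :
    weightedHomogeneousComponent w (Finsupp.weight w s) p ≠ 0 := by
  classical
  intro h
  have := congrArg (coeff s) h
  rw [coeff_weightedHomogeneousComponent, if_pos rfl, coeff_zero] at this
  exact mem_support_iff.mp hs this

noncomputable def weightedScaling [CommSemiring R] :
    MvPolynomial σ R →ₐ[R] Polynomial (MvPolynomial σ R) :=
  aeval fun i => Polynomial.monomial (w i) (X i)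

lemma weightedScaling_monomial [CommSemiring R] (s : σ →₀ ℕ) (c : R) :
    weightedScaling w (monomial s c) =
      Polynomial.monomial (Finsupp.weight w s) (monomial s c) := by
  rw [weightedScaling, aeval_monomial, Finsupp.prod]
  simp only [Polynomial.monomial_pow, Polynomial.prod_monomial, Polynomial.algebraMap_apply,
    Polynomial.C_mul_monomial, Finsupp.weight_apply, Finsupp.sum, smul_eq_mul, algebraMap_eq,
    monomial_eq, Finsupp.prod, mul_comm]

lemma coeff_weightedScaling [CommSemiring R] (p : MvPolynomial σ R) (n : ℕ) :
    (weightedScaling w p).coeff n = weightedHomogeneousComponent w n p := by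
  induction p using MvPolynomial.induction_on' with
  | monomial s c =>
    classical
    ext t
    rw [weightedScaling_monomial, Polynomial.coeff_monomial, coeff_weightedHomogeneousComponent]
    by_cases hst : s = t
    · subst hst
      split_ifs <;> simp
    · split_ifs <;> simp [coeff_monomial, hst]
  | add p q hp hq => simp only [map_add, Polynomial.coeff_add, hp, hq]

theorem exists_isWeightedHomogeneous_of_sum_weight_X_mul_pderiv_eq_mul [CommRing R]
    [IsDomain R] [CharZero R] [Fintype σ] {p k : MvPolynomial σ R}
    (h : ∑ i, w i • (X i * pderiv i p) = k * p) : ∃ n, IsWeightedHomogeneous w p n := by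
  obtain hp | ⟨s₀, hs₀⟩ := p.support.eq_empty_or_nonempty
  · exact ⟨0, by rw [support_eq_empty.mp hp]; exact isWeightedHomogeneous_zero _ _ _⟩
  set F := weightedScaling w p
  set G := weightedScaling w k
  have hEuler : ∀ n, (G * F).coeff n = n • F.coeff n := fun n => by
    rw [← map_mul, ← h, coeff_weightedScaling, coeff_weightedScaling,
      weightedHomogeneousComponent_sum_weight_X_mul_pderiv]
  have hF : ∀ s ∈ p.support, F.coeff (Finsupp.weight w s) ≠ 0 := fun s hs => by
    rw [coeff_weightedScaling]
    exact weightedHomogeneousComponent_weight_ne_zero w hs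
  have hF₀ : F ≠ 0 := fun h₀ => hF s₀ hs₀ (by rw [h₀, Polynomial.coeff_zero])
  -- `G * F = T • dF/dT` has no term beyond the `T`-degree of `F`.
  have hG : G.natDegree = 0 := by
    by_contra hG
    have hG₀ : G ≠ 0 := fun h₀ => hG (by rw [h₀, Polynomial.natDegree_zero])
    have htop := Polynomial.coeff_mul_degree_add_degree G F
    rw [hEuler, Polynomial.coeff_eq_zero_of_natDegree_lt (by omega), smul_zero] at htop
    exact mul_ne_zero (Polynomial.leadingCoeff_ne_zero.mpr hG₀)
      (Polynomial.leadingCoeff_ne_zero.mpr hF₀) htop.symm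
  have hweight : ∀ s ∈ p.support, (Finsupp.weight w s : MvPolynomial σ R) = G.coeff 0 := by
    intro s hs
    have := hEuler (Finsupp.weight w s)
    rw [Polynomial.eq_C_of_natDegree_eq_zero hG, Polynomial.coeff_C_mul, nsmul_eq_mul] at this
    exact (mul_right_cancel₀ (hF s hs) this).symm
  exact ⟨Finsupp.weight w s₀, fun {s} hs =>
    by exact_mod_cast (hweight s (mem_support_iff.mpr hs)).trans (hweight s₀ hs₀).symm⟩

end WeightedEuler

section FinTwo

variable {R : Type*} [CommSemiring R]

lemma _root_.Finsupp.weight_fin_two (l m : ℕ) (s : Fin 2 →₀ ℕ) :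
    Finsupp.weight ![l, m] s = l * s 0 + m * s 1 := by
  simp [Finsupp.weight_apply, Finsupp.sum_fintype, Fin.sum_univ_two, mul_comm]

lemma isWeightedHomogeneous_fin_two_iff {f : MvPolynomial (Fin 2) R} {l m d : ℕ} :
    IsWeightedHomogeneous ![l, m] f d ↔ ∀ s ∈ f.support, l * s 0 + m * s 1 = d := by
  simp only [IsWeightedHomogeneous, mem_support_iff, Finsupp.weight_fin_two]

lemma natCast_mul_X_mul_pderiv_fin_two (f : MvPolynomial (Fin 2) R) (l m : ℕ) :
    (l : MvPolynomial (Fin 2) R) * X 0 * pderiv 0 f +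
        (m : MvPolynomial (Fin 2) R) * X 1 * pderiv 1 f =
      ∑ i, ![l, m] i • (X i * pderiv i f) := by
  simp [Fin.sum_univ_two, nsmul_eq_mul, mul_assoc]

end FinTwo

section FiniteQuotient

variable {K σ : Type*} [Field K]

lemma degreeOf_aeval_X_eq_zero {i j : σ} (hij : i ≠ j) (q : Polynomial K) :
    degreeOf j (Polynomial.aeval (X i : MvPolynomial σ K) q) = 0 := by
  have hmem : Polynomial.aeval (X i : MvPolynomial σ K) q ∈ supported K {i} := by
    rw [supported_eq_adjoin_X, Set.image_singleton]
    exact Polynomial.aeval_mem_adjoin_singleton K _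
  rw [mem_supported] at hmem
  by_contra hj
  exact hij (Set.mem_singleton_iff.mp (hmem (mem_vars_iff_degreeOf_ne_zero.mpr hj))).symm

lemma exists_dvd_aeval_X_of_finiteDimensional {p : MvPolynomial σ K}
    [FiniteDimensional K (MvPolynomial σ K ⧸ Ideal.span {p})] (i : σ) :
    ∃ q : Polynomial K, Polynomial.aeval (X i : MvPolynomial σ K) q ≠ 0 ∧
      p ∣ Polynomial.aeval (X i) q := by
  obtain ⟨q, hq, hroot⟩ := IsIntegral.of_finite K (Ideal.Quotient.mkₐ K (Ideal.span {p}) (X i))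
  refine ⟨q, fun h => transcendental_X K i ⟨q, hq.ne_zero, h⟩, ?_⟩
  rw [← Ideal.mem_span_singleton, ← Ideal.Quotient.eq_zero_iff_mem, ← Ideal.Quotient.mkₐ_eq_mk K,
    ← Polynomial.aeval_algHom_apply, Polynomial.aeval_def, hroot]

theorem isUnit_of_finiteDimensional_quotient [Nontrivial σ] {p : MvPolynomial σ K}
    [FiniteDimensional K (MvPolynomial σ K ⧸ Ideal.span {p})] : IsUnit p := by
  have hp : p ≠ 0 := by
    obtain ⟨q, hq, hdvd⟩ :=
      exists_dvd_aeval_X_of_finiteDimensional (p := p) (Classical.arbitrary σ)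
    exact ne_zero_of_dvd_ne_zero hq hdvd
  -- `p` divides a nonzero polynomial in `X i` alone, for every `i`; take `i ≠ j`.
  have hvars : p.vars = ∅ := Finset.eq_empty_of_forall_notMem fun j hj => by
    obtain ⟨i, hij⟩ := exists_ne j
    obtain ⟨q, hq, t, ht⟩ := exists_dvd_aeval_X_of_finiteDimensional (p := p) i
    have := degreeOf_aeval_X_eq_zero hij q
    rw [ht, degreeOf_mul_eq hp (right_ne_zero_of_mul (ht ▸ hq))] at this
    exact mem_vars_iff_degreeOf_ne_zero.mp hj (by omega)
  rw [vars_eq_empty_iff_eq_C.mp hvars] at hp ⊢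
  exact (isUnit_iff_ne_zero.mpr fun h => hp (by rw [h, C_0])).map C

theorem isRelPrime_of_finiteDimensional_quotient [Nontrivial σ] {a b : MvPolynomial σ K}
    (h : FiniteDimensional K (MvPolynomial σ K ⧸ Ideal.span {a, b})) : IsRelPrime a b := by
  intro p ha hb
  have hle : Ideal.span {a, b} ≤ Ideal.span {p} := by
    rw [Ideal.span_le, Set.insert_subset_iff, Set.singleton_subset_iff]
    exact ⟨Ideal.mem_span_singleton.mpr ha, Ideal.mem_span_singleton.mpr hb⟩
  have : FiniteDimensional K (MvPolynomial σ K ⧸ Ideal.span {p}) :=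
    Module.Finite.of_surjective (Ideal.Quotient.factorₐ K hle).toLinearMap
      (Ideal.Quotient.factor_surjective hle)
  exact isUnit_of_finiteDimensional_quotient

end FiniteQuotient

end MvPolynomial

section PairSyzygy

variable {R : Type*} [CommRing R] [IsDomain R]

theorem IsRelPrime.exists_eq_of_mul_add_mul_eq_zero [DecompositionMonoid R] {a b u v : R}
    (hab : IsRelPrime a b) (h : u * a + v * b = 0) : ∃ g, u = -(g * b) ∧ v = g * a := by
  obtain ⟨g, rfl⟩ : a ∣ v := hab.dvd_of_dvd_mul_right ⟨-u, by linear_combination h⟩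
  by_cases ha : a = 0
  · subst ha
    obtain ⟨c, hc⟩ := (isRelPrime_zero_left.mp hab).exists_right_inv
    exact ⟨-(u * c), by linear_combination -u * hc, by simp⟩
  · refine ⟨g, ?_, by ring⟩
    have : a * (u + g * b) = 0 := by linear_combination h
    linear_combination (mul_eq_zero.mp this).resolve_left ha

lemma linearIndependent_pair_of_mul_add_mul_ne_zero {a b : R} (hab : a ≠ 0 ∨ b ≠ 0)
    {v : R × R} (hv : v.1 * a + v.2 * b ≠ 0) : LinearIndependent R ![(-b, a), v] := by
  refine LinearIndependent.pair_iff.mpr fun s t hst => ?_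
  obtain ⟨h₁, h₂⟩ := Prod.ext_iff.mp hst
  simp only [Prod.fst_add, Prod.snd_add, Prod.smul_fst, Prod.smul_snd, smul_eq_mul,
    Prod.fst_zero, Prod.snd_zero] at h₁ h₂
  have ht : t = 0 := by
    have : t * (v.1 * a + v.2 * b) = 0 := by linear_combination a * h₁ + b * h₂
    exact (mul_eq_zero.mp this).resolve_right hv
  subst ht
  refine ⟨?_, rfl⟩
  rcases hab with ha | hb
  · exact (mul_eq_zero.mp (by linear_combination h₂ : s * a = 0)).resolve_right ha
  · exact (mul_eq_zero.mp (by linear_combination -h₁ : s * b = 0)).resolve_right hb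

lemma exists_eq_smul_add_smul_of_mul_add_mul_eq [DecompositionMonoid R] {a b d f : R}
    (hab : IsRelPrime a b) (hd : IsUnit d) {v w : R × R} {k : R}
    (hv : v.1 * a + v.2 * b = d * f) (hw : w.1 * a + w.2 * b = k * f) :
    ∃ c : R × R, w = c.1 • (-b, a) + c.2 • v := by
  obtain ⟨g, hg₁, hg₂⟩ := hab.exists_eq_of_mul_add_mul_eq_zero
    (u := d * w.1 - k * v.1) (v := d * w.2 - k * v.2) (by linear_combination d * hw - k * hv)
  obtain ⟨e, he⟩ := hd.exists_left_inv
  refine ⟨(e * g, e * k), Prod.ext ?_ ?_⟩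
  · simp only [Prod.fst_add, Prod.smul_fst, smul_eq_mul]
    linear_combination e * hg₁ - w.1 * he
  · simp only [Prod.snd_add, Prod.smul_snd, smul_eq_mul]
    linear_combination e * hg₂ - w.2 * he

end PairSyzygy

section InvariantCurves

variable {K : Type*} [Field K] {f : MvPolynomial (Fin 2) K}

lemma FreelyGen.of_linearIndependent {v₀ v₁ : MvPolynomial (Fin 2) K × MvPolynomial (Fin 2) K}
    (h₀ : VfMem f v₀) (h₁ : VfMem f v₁)
    (hspan : ∀ w, VfMem f w → ∃ c : MvPolynomial (Fin 2) K × MvPolynomial (Fin 2) K,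
      w = c.1 • v₀ + c.2 • v₁)
    (hli : LinearIndependent (MvPolynomial (Fin 2) K) ![v₀, v₁]) : FreelyGen f v₀ v₁ := by
  refine ⟨h₀, h₁, fun w hw => ?_⟩
  obtain ⟨c, hc⟩ := hspan w hw
  refine ⟨c, hc, fun c' hc' => ?_⟩
  obtain ⟨h₁, h₂⟩ := LinearIndependent.pair_iff.mp hli (c'.1 - c.1) (c'.2 - c.2)
    (by linear_combination (norm := module) hc - hc')
  exact Prod.ext (sub_eq_zero.mp h₁) (sub_eq_zero.mp h₂)

theorem freelyGen_hamiltonian_of_mul_add_mul_eq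
    {v : MvPolynomial (Fin 2) K × MvPolynomial (Fin 2) K} {d : K} (hd : d ≠ 0) (hf : f ≠ 0)
    (hrp : IsRelPrime (pderiv (0 : Fin 2) f) (pderiv (1 : Fin 2) f))
    (hv : v.1 * pderiv (0 : Fin 2) f + v.2 * pderiv (1 : Fin 2) f = C d * f) :
    FreelyGen f (-(pderiv (1 : Fin 2) f), pderiv (0 : Fin 2) f) v := by
  refine .of_linearIndependent ?_ ⟨C d, hv⟩ ?_ ?_
  · exact ⟨0, by ring⟩
  · exact fun w ⟨k, hk⟩ => exists_eq_smul_add_smul_of_mul_add_mul_eq hrp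
      ((isUnit_iff_ne_zero.mpr hd).map C) hv hk
  refine linearIndependent_pair_of_mul_add_mul_ne_zero ?_
    (hv ▸ mul_ne_zero (C_ne_zero.mpr hd) hf)
  by_contra! h
  exact not_isRelPrime_zero_zero (h.1 ▸ h.2 ▸ hrp)

lemma FreelyGen.pderiv_eq_zero {v₀ v₁ : MvPolynomial (Fin 2) K × MvPolynomial (Fin 2) K}
    (h : FreelyGen f v₀ v₁) (hf : f ≠ 0)
    (h₀ : v₀.1 * pderiv (0 : Fin 2) f + v₀.2 * pderiv (1 : Fin 2) f = 0)
    (h₁ : v₁.1 * pderiv (0 : Fin 2) f + v₁.2 * pderiv (1 : Fin 2) f = 0) :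
    pderiv (0 : Fin 2) f = 0 ∧ pderiv (1 : Fin 2) f = 0 := by
  have htangent :
      ∀ w, VfMem f w → w.1 * pderiv (0 : Fin 2) f + w.2 * pderiv (1 : Fin 2) f = 0 := by
    intro w hw
    obtain ⟨c, rfl, -⟩ := h.2.2 w hw
    simp only [Prod.fst_add, Prod.snd_add, Prod.smul_fst, Prod.smul_snd, smul_eq_mul]
    linear_combination c.1 * h₀ + c.2 * h₁
  have hx := htangent (f, 0) ⟨pderiv (0 : Fin 2) f, by ring⟩
  have hy := htangent (0, f) ⟨pderiv (1 : Fin 2) f, by ring⟩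
  simp only [zero_mul, add_zero, zero_add] at hx hy
  exact ⟨(mul_eq_zero.mp hx).resolve_left hf, (mul_eq_zero.mp hy).resolve_left hf⟩

end InvariantCurves

/-- For a weakly tame `f ∈ K[x,y]` and nonnegative integers
`l, m`: there exists a positive integer `d` such that `f` is quasi-homogeneous
of degree `d` with weights `(l, m)` (every monomial `x^a y^b` of `f` satisfies
`l·a + m·b = d`) iff `V_f` is freely generated by `X₀ = (-f_y, f_x)` and
`X_* = (l·x, m·y)`. -/
theorem stmt4 (K : Type*) [Field K] [Algebra K ℂ]
    (f : MvPolynomial (Fin 2) K) (l m : ℕ)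
    (hwt : FiniteDimensional K
      (MvPolynomial (Fin 2) K ⧸
        Ideal.span {pderiv (0 : Fin 2) f, pderiv (1 : Fin 2) f})) :
    (∃ d : ℕ, 0 < d ∧ ∀ s ∈ f.support, l * s 0 + m * s 1 = d) ↔
      FreelyGen f (-(pderiv (1 : Fin 2) f), pderiv (0 : Fin 2) f)
        ((l : MvPolynomial (Fin 2) K) * X 0, (m : MvPolynomial (Fin 2) K) * X 1) := by
  have : CharZero K := (algebraMap K ℂ).charZero
  have hrp := isRelPrime_of_finiteDimensional_quotient hwt
  have hf : f ≠ 0 := by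
    rintro rfl
    simp only [map_zero] at hrp
    exact not_isRelPrime_zero_zero hrp
  constructor
  · rintro ⟨d, hd, hhom⟩
    refine freelyGen_hamiltonian_of_mul_add_mul_eq (Nat.cast_ne_zero.mpr hd.ne') hf hrp ?_
    rw [natCast_mul_X_mul_pderiv_fin_two,
      (isWeightedHomogeneous_fin_two_iff.mpr hhom).sum_weight_X_mul_pderiv, nsmul_eq_mul,
      map_natCast]
  · intro hfree
    obtain ⟨k, hk⟩ := hfree.2.1
    rw [natCast_mul_X_mul_pderiv_fin_two] at hk
    obtain ⟨d, hd⟩ := exists_isWeightedHomogeneous_of_sum_weight_X_mul_pderiv_eq_mul _ hk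
    refine ⟨d, Nat.pos_of_ne_zero fun hd₀ => ?_, isWeightedHomogeneous_fin_two_iff.mp hd⟩
    have hEuler := hd.sum_weight_X_mul_pderiv
    rw [hd₀, zero_smul, ← natCast_mul_X_mul_pderiv_fin_two] at hEuler
    obtain ⟨hx, hy⟩ := hfree.pderiv_eq_zero hf (by ring) hEuler
    exact not_isRelPrime_zero_zero (hx ▸ hy ▸ hrp)
end

section
/- Let f ∈ K[x,y] be a nonzero polynomial whose partial derivatives f_x, f_y are not both zero, let D be a greatest common divisor of f_x and f_y, and write f_x = D·u, f_y = D·v with u, v ∈ K[x,y]. If the K[x,y]-module V_f is freely generated by the vector field X₀/D = (−v, u) together with one additional element X_* ∈ V_f, then f belongs to the ideal ⟨u, v⟩ = ⟨f_x/D, f_y/D⟩ of K[x,y]. -/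
open MvPolynomial

/-- Let `f ∈ K[x,y]` be nonzero with `f_x, f_y` not both zero,
`D` a gcd of `f_x` and `f_y`, and `f_x = D·u`, `f_y = D·v`. If `V_f` is freely
generated by `X₀/D = (-v, u)` together with one additional element `X_* ∈ V_f`,
then `f ∈ ⟨u, v⟩ = ⟨f_x/D, f_y/D⟩`. -/
theorem stmt5 (K : Type*) [Field K] [Algebra K ℂ]
    (f D u v : MvPolynomial (Fin 2) K)
    (hf : f ≠ 0)
    (hder : ¬ (pderiv (0 : Fin 2) f = 0 ∧ pderiv (1 : Fin 2) f = 0))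
    (hu : pderiv (0 : Fin 2) f = D * u)
    (hv : pderiv (1 : Fin 2) f = D * v)
    (hgcd : ∀ e : MvPolynomial (Fin 2) K,
      e ∣ pderiv (0 : Fin 2) f → e ∣ pderiv (1 : Fin 2) f → e ∣ D)
    (hfree : ∃ Xstar, FreelyGen f (-v, u) Xstar) :
    f ∈ Ideal.span {u, v} := by
  obtain ⟨⟨P, Q⟩, -, -, huniq⟩ := hfree
  obtain ⟨⟨a, b⟩, hab, -⟩ := huniq (f, 0)
    ⟨pderiv (0 : Fin 2) f, by ring⟩
  obtain ⟨⟨c, d⟩, hcd, -⟩ := huniq (0, f)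
    ⟨pderiv (1 : Fin 2) f, by ring⟩
  rw [Prod.ext_iff] at hab hcd
  simp only [Prod.fst_add, Prod.snd_add, Prod.smul_fst, Prod.smul_snd,
    smul_eq_mul] at hab hcd
  obtain ⟨h1, h2⟩ := hab
  obtain ⟨h3, h4⟩ := hcd
  have hA : b * f = (b * c - a * d) * u := by linear_combination b * h4 - d * h2
  have hB : (a * d - b * c) * P = -(c * f) := by linear_combination -a * h3 + c * h1
  have key : f * (f - (c * u - a * v)) = 0 := by
    linear_combination f * h1 + P * hA - u * hB
  rcases mul_eq_zero.mp key with h | h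
  · exact absurd h hf
  · have hfe : f = c * u + (-a) * v := by linear_combination h
    rw [Ideal.mem_span_pair]
    exact ⟨c, -a, hfe.symm⟩
end

section
/- Let f ∈ K[x,y] be a nonzero polynomial whose partial derivatives f_x, f_y are not both zero, let D be a greatest common divisor of f_x and f_y, and write f_x = D·u, f_y = D·v. If the K[x,y]-module V_f is generated by the vector field X₀/D = (−v, u) and a second element X_* ∈ V_f with cofactor k_*, then k_* divides D in K[x,y]. -/
open MvPolynomial

/-- Let `f ∈ K[x,y]` be nonzero with `f_x, f_y` not both zero,
`D` a gcd of `f_x` and `f_y`, and `f_x = D·u`, `f_y = D·v`. If `V_f` is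
generated by `X₀/D = (-v, u)` and a second element `X_* ∈ V_f` with cofactor
`k_*`, then `k_*` divides `D`. -/
theorem stmt6 (K : Type*) [Field K] [Algebra K ℂ]
    (f D u v : MvPolynomial (Fin 2) K)
    (hf : f ≠ 0)
    (hder : ¬ (pderiv (0 : Fin 2) f = 0 ∧ pderiv (1 : Fin 2) f = 0))
    (hu : pderiv (0 : Fin 2) f = D * u)
    (hv : pderiv (1 : Fin 2) f = D * v)
    (hgcd : ∀ e : MvPolynomial (Fin 2) K,
      e ∣ pderiv (0 : Fin 2) f → e ∣ pderiv (1 : Fin 2) f → e ∣ D)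
    (Xstar : MvPolynomial (Fin 2) K × MvPolynomial (Fin 2) K)
    (kstar : MvPolynomial (Fin 2) K)
    (hcof : Xstar.1 * pderiv (0 : Fin 2) f + Xstar.2 * pderiv (1 : Fin 2) f = kstar * f)
    (hgen : ∀ w, VfMem f w →
      ∃ a b : MvPolynomial (Fin 2) K, w = a • (-v, u) + b • Xstar) :
    kstar ∣ D := by
  obtain ⟨a, b, hab⟩ := hgen (f, 0) ⟨pderiv (0 : Fin 2) f, by ring⟩
  have e1 : f = a * (-v) + b * Xstar.1 := by
    have := congrArg Prod.fst hab; simpa [smul_eq_mul] using this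
  have e2 : (0 : MvPolynomial (Fin 2) K) = a * u + b * Xstar.2 := by
    have := congrArg Prod.snd hab; simpa [smul_eq_mul] using this
  obtain ⟨a', b', hab'⟩ := hgen (0, f) ⟨pderiv (1 : Fin 2) f, by ring⟩
  have e1' : (0 : MvPolynomial (Fin 2) K) = a' * (-v) + b' * Xstar.1 := by
    have := congrArg Prod.fst hab'; simpa [smul_eq_mul] using this
  have e2' : f = a' * u + b' * Xstar.2 := by
    have := congrArg Prod.snd hab'; simpa [smul_eq_mul] using this
  have hx : pderiv (0 : Fin 2) f = b * kstar := by
    apply mul_right_cancel₀ hf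
    linear_combination (pderiv (0 : Fin 2) f) * e1 + (pderiv (1 : Fin 2) f) * e2 +
      b * hcof + a * u * hv - a * v * hu
  have hy : pderiv (1 : Fin 2) f = b' * kstar := by
    apply mul_right_cancel₀ hf
    linear_combination (pderiv (0 : Fin 2) f) * e1' + (pderiv (1 : Fin 2) f) * e2' +
      b' * hcof + a' * u * hv - a' * v * hu
  exact hgcd kstar ⟨b, by rw [hx]; ring⟩ ⟨b', by rw [hy]; ring⟩
end

section
/- Let f ∈ K[x,y] be a nonzero polynomial with f ∈ J(f) = ⟨f_x, f_y⟩, let D be a greatest common divisor of f_x and f_y, and write f_x = D·u, f_y = D·v. Then there exists X_* ∈ V_f such that the K[x,y]-module V_f is freely generated by the vector field X₀/D = (−v, u) and X_*. -/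
open MvPolynomial

/-- Let `f ∈ K[x,y]` be nonzero with `f ∈ J(f) = ⟨f_x, f_y⟩`,
`D` a gcd of `f_x` and `f_y`, and `f_x = D·u`, `f_y = D·v`. Then there exists
`X_* ∈ V_f` such that `V_f` is freely generated by `X₀/D = (-v, u)` and `X_*`. -/
theorem stmt7 (K : Type*) [Field K] [Algebra K ℂ]
    (f D u v : MvPolynomial (Fin 2) K)
    (hf : f ≠ 0)
    (hJ : f ∈ Ideal.span {pderiv (0 : Fin 2) f, pderiv (1 : Fin 2) f})
    (hu : pderiv (0 : Fin 2) f = D * u)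
    (hv : pderiv (1 : Fin 2) f = D * v)
    (hgcd : ∀ e : MvPolynomial (Fin 2) K,
      e ∣ pderiv (0 : Fin 2) f → e ∣ pderiv (1 : Fin 2) f → e ∣ D) :
    ∃ Xstar, FreelyGen f (-v, u) Xstar := by
  obtain ⟨A, B, hAB⟩ := Ideal.mem_span_pair.mp hJ
  -- hAB : A * fx + B * fy = f
  have hD : D ≠ 0 := by
    rintro rfl
    rw [hu, hv] at hAB
    simp at hAB
    exact hf hAB.symm
  have huv : ¬ (u = 0 ∧ v = 0) := by
    rintro ⟨rfl, rfl⟩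
    rw [hu, hv] at hAB
    simp at hAB
    exact hf hAB.symm
  have hrel : IsRelPrime u v := by
    intro d hdu hdv
    have h1 : D * d ∣ D := by
      refine hgcd (D * d) ?_ ?_
      · rw [hu]; exact mul_dvd_mul_left D hdu
      · rw [hv]; exact mul_dvd_mul_left D hdv
    have h2 : d ∣ 1 := (mul_dvd_mul_iff_left hD).mp (by rwa [mul_one])
    exact isUnit_of_dvd_one h2
  refine ⟨(A, B), ⟨0, by rw [hu, hv]; ring⟩, ⟨1, by simpa using hAB⟩, ?_⟩
  rintro ⟨P, Q⟩ ⟨k, hw⟩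
  simp only at hw
  have hsum : (P - k * A) * u + (Q - k * B) * v = 0 := by
    have key : D * ((P - k * A) * u + (Q - k * B) * v) = D * 0 := by
      rw [mul_zero]
      linear_combination hw - k * hAB - (P - k * A) * hu - (Q - k * B) * hv
    exact mul_left_cancel₀ hD key
  -- find c₁ with P - k*A = -c₁*v and Q - k*B = c₁*u
  have hex : ∃ c₁ : MvPolynomial (Fin 2) K,
      P = c₁ * (-v) + k * A ∧ Q = c₁ * u + k * B := by
    by_cases hv0 : v = 0
    · subst hv0
      have hfx : pderiv (0 : Fin 2) f ≠ 0 := by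
        intro h0
        rw [h0, hv] at hAB
        simp at hAB
        exact hf hAB.symm
      obtain ⟨t, ht⟩ : pderiv (0 : Fin 2) f ∣ D :=
        hgcd _ dvd_rfl (by rw [hv, mul_zero]; exact dvd_zero _)
      have hut : u * t = 1 := by
        have : pderiv (0 : Fin 2) f * 1 = pderiv (0 : Fin 2) f * (u * t) := by
          linear_combination hu + u * ht
        exact (mul_left_cancel₀ hfx this).symm
      have hu0 : u ≠ 0 := fun h => by
        rw [h, zero_mul] at hut; exact zero_ne_one hut
      have hP : P - k * A = 0 := by
        have : (P - k * A) * u = 0 * u := by rw [zero_mul]; linear_combination hsum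
        exact mul_right_cancel₀ hu0 this
      refine ⟨(Q - k * B) * t, by linear_combination hP, by linear_combination (k * B - Q) * hut⟩
    · have hdvd : v ∣ (P - k * A) * u := ⟨-(Q - k * B), by linear_combination hsum⟩
      have hv2 : v ∣ P - k * A := hrel.symm.dvd_of_dvd_mul_right hdvd
      obtain ⟨c, hc⟩ := hv2
      refine ⟨-c, by linear_combination hc, ?_⟩
      have : v * (Q - k * B - -c * u) = v * 0 := by
        rw [mul_zero]; linear_combination hsum - u * hc
      have h0 := mul_left_cancel₀ hv0 this
      linear_combination h0
  obtain ⟨c₁, hc1, hc2⟩ := hex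
  refine ⟨(c₁, k), ?_, ?_⟩
  · simp only [Prod.smul_mk, smul_eq_mul, Prod.mk_add_mk, Prod.mk.injEq, mul_neg]
    exact ⟨by linear_combination hc1, by linear_combination hc2⟩
  · rintro ⟨d₁, d₂⟩ hd
    simp only [Prod.smul_mk, smul_eq_mul, Prod.mk_add_mk, Prod.mk.injEq, mul_neg] at hd
    obtain ⟨hd1, hd2⟩ := hd
    have hk : d₂ * f = k * f := by
      linear_combination hw - d₂ * hAB - (pderiv (0 : Fin 2) f) * hd1
        - (pderiv (1 : Fin 2) f) * hd2 + d₁ * v * hu - d₁ * u * hv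
    have hd2k : d₂ = k := mul_right_cancel₀ hf hk
    subst hd2k
    have h1 : (d₁ - c₁) * u = 0 := by linear_combination hc2 - hd2
    have h2 : (d₁ - c₁) * v = 0 := by linear_combination hd1 - hc1
    have hd1c : d₁ = c₁ := by
      by_cases hu0 : u = 0
      · have hv0 : v ≠ 0 := fun h => huv ⟨hu0, h⟩
        exact sub_eq_zero.mp ((mul_eq_zero.mp h2).resolve_right hv0)
      · exact sub_eq_zero.mp ((mul_eq_zero.mp h1).resolve_right hu0)
    simp [hd1c]
end

section
/- Let n ≥ 2 and let f ∈ K[x₁,…,xₙ] be a nonzero polynomial whose partial derivatives f_{x₁},…,f_{xₙ} are not all zero. Let D be a greatest common divisor of f_{x₁},…,f_{xₙ} and write f_{x_j} = D·u_j. If the K[x₁,…,xₙ]-module V_f is an internal direct sum V_f = V_f⁰ ⊕ W, where W is a free submodule of rank 1, then f belongs to the ideal ⟨u₁,…,uₙ⟩ = ⟨f_{x₁}/D,…,f_{xₙ}/D⟩ of K[x₁,…,xₙ]. -/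
/-! Write `W = K[x] ∙ G` and let `g` be the cofactor of `G`. The field `f ∂/∂xⱼ` lies in `V_f`
with cofactor `f_{xⱼ}`; splitting it along `V_f⁰ ⊔ K[x] ∙ G` shows `g ∣ f_{xⱼ}` for every `j`, so
`g ≠ 0` and `D = g h`. Then `g f = ∑ Gⱼ f_{xⱼ} = g ∑ (h Gⱼ) uⱼ`, and cancelling `g` exhibits
`f ∈ ⟨u₁,…,uₙ⟩`. -/

open MvPolynomial

/-- The `K[x₁,…,xₙ]`-submodule `V_f` of `K[x₁,…,xₙ]ⁿ` consisting of the
polynomial vector fields `∑ Pⱼ ∂/∂xⱼ` leaving the hypersurface `f = 0`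
invariant, i.e. `∑ Pⱼ f_{xⱼ} = k f` for some cofactor `k`. -/
noncomputable def Vf {K : Type*} [Field K] {n : ℕ} (f : MvPolynomial (Fin n) K) :
    Submodule (MvPolynomial (Fin n) K) (Fin n → MvPolynomial (Fin n) K) where
  carrier := {P | ∃ k : MvPolynomial (Fin n) K, ∑ j, P j * pderiv j f = k * f}
  add_mem' := by
    rintro P Q ⟨k, hk⟩ ⟨l, hl⟩
    refine ⟨k + l, ?_⟩
    simp only [Pi.add_apply, add_mul, Finset.sum_add_distrib, hk, hl]
  zero_mem' := ⟨0, by simp⟩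
  smul_mem' := by
    rintro c P ⟨k, hk⟩
    refine ⟨c * k, ?_⟩
    simp only [Pi.smul_apply, smul_eq_mul, mul_assoc, ← Finset.mul_sum, hk]
/-- The submodule `V_f⁰ ⊆ V_f` of vector fields with zero cofactor:
`∑ Pⱼ f_{xⱼ} = 0`. -/
noncomputable def Vf0 {K : Type*} [Field K] {n : ℕ} (f : MvPolynomial (Fin n) K) :
    Submodule (MvPolynomial (Fin n) K) (Fin n → MvPolynomial (Fin n) K) where
  carrier := {P | ∑ j, P j * pderiv j f = 0}
  add_mem' := by
    intro P Q hP hQ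
    simp only [Set.mem_setOf_eq, Pi.add_apply, add_mul,
      Finset.sum_add_distrib] at *
    rw [hP, hQ, add_zero]
  zero_mem' := by simp
  smul_mem' := by
    intro c P hP
    simp only [Set.mem_setOf_eq, Pi.smul_apply, smul_eq_mul, mul_assoc,
      ← Finset.mul_sum] at *
    rw [hP, mul_zero]

theorem Submodule.exists_eq_span_singleton_of_rank_eq_one {R M : Type*} [CommRing R]
    [StrongRankCondition R] [AddCommGroup M] [Module R M] {W : Submodule R M}
    [Module.Free R W] (h : Module.rank R W = 1) : ∃ G : M, W = R ∙ G := by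
  obtain ⟨e⟩ := Module.nonempty_linearEquiv_iff_rank_eq_one.mpr h
  refine ⟨e 1, le_antisymm (fun x hx => ?_) ((span_singleton_le_iff_mem _ _).mpr (e 1).2)⟩
  refine mem_span_singleton.mpr ⟨e.symm ⟨x, hx⟩, ?_⟩
  rw [← coe_smul, ← e.map_smul, smul_eq_mul, mul_one, e.apply_symm_apply]

section

variable {K : Type*} [Field K] {n : ℕ}

theorem sum_single_mul_pderiv (f : MvPolynomial (Fin n) K) (j : Fin n) :
    ∑ i, (Pi.single j f : Fin n → MvPolynomial (Fin n) K) i * pderiv i f = pderiv j f * f := by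
  simp [Pi.single_apply, ite_mul, mul_comm]

theorem dvd_cofactor_of_mem_Vf0_sup_span_singleton {f : MvPolynomial (Fin n) K} (hf : f ≠ 0)
    {G : Fin n → MvPolynomial (Fin n) K} {g : MvPolynomial (Fin n) K}
    (hG : ∑ j, G j * pderiv j f = g * f)
    {P : Fin n → MvPolynomial (Fin n) K} (hP : P ∈ Vf0 f ⊔ MvPolynomial (Fin n) K ∙ G)
    {k : MvPolynomial (Fin n) K} (hk : ∑ j, P j * pderiv j f = k * f) : g ∣ k := by
  obtain ⟨Q, hQ, _, hcG, rfl⟩ := Submodule.mem_sup.mp hP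
  obtain ⟨c, rfl⟩ := Submodule.mem_span_singleton.mp hcG
  have hQ : ∑ j, Q j * pderiv j f = 0 := hQ
  refine ⟨c, mul_right_cancel₀ hf ?_⟩
  simp only [Pi.add_apply, Pi.smul_apply, smul_eq_mul, add_mul, Finset.sum_add_distrib, hQ,
    mul_assoc, ← Finset.mul_sum, hG, zero_add] at hk
  rw [← hk]
  ring

end

theorem stmt8_general (K : Type*) [Field K]
    (n : ℕ)
    (f : MvPolynomial (Fin n) K) (hf : f ≠ 0)
    (hder : ¬ ∀ j, pderiv j f = 0)
    (D : MvPolynomial (Fin n) K) (u : Fin n → MvPolynomial (Fin n) K)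
    (hu : ∀ j, pderiv j f = D * u j)
    (hgcd : ∀ e : MvPolynomial (Fin n) K, (∀ j, e ∣ pderiv j f) → e ∣ D)
    (W : Submodule (MvPolynomial (Fin n) K) (Fin n → MvPolynomial (Fin n) K))
    (hfreeW : Module.Free (MvPolynomial (Fin n) K) W)
    (hrankW : Module.rank (MvPolynomial (Fin n) K) W = 1)
    (hsup : Vf0 f ⊔ W = Vf f) :
    f ∈ Ideal.span (Set.range u) := by
  obtain ⟨G, rfl⟩ := W.exists_eq_span_singleton_of_rank_eq_one hrankW
  obtain ⟨g, hg⟩ : G ∈ Vf f :=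
    hsup ▸ Submodule.mem_sup_right (Submodule.mem_span_singleton_self G)
  have hg_dvd (j : Fin n) : g ∣ pderiv j f :=
    dvd_cofactor_of_mem_Vf0_sup_span_singleton hf hg
      (hsup ▸ ⟨pderiv j f, sum_single_mul_pderiv f j⟩) (sum_single_mul_pderiv f j)
  have hg0 : g ≠ 0 := fun h0 => hder fun j => zero_dvd_iff.mp (h0 ▸ hg_dvd j)
  obtain ⟨h, rfl⟩ := hgcd g hg_dvd
  refine Ideal.mem_span_range_iff_exists_fun.mpr ⟨fun j => h * G j, mul_left_cancel₀ hg0 ?_⟩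
  simp only [← hg, hu, Finset.mul_sum]
  exact Finset.sum_congr rfl fun j _ => by ring

/-- Let `n ≥ 2` and `f ∈ K[x₁,…,xₙ]` be nonzero with partial
derivatives not all zero, `D` a gcd of the `f_{xⱼ}`, and `f_{xⱼ} = D·uⱼ`.
If `V_f = V_f⁰ ⊕ W` (internal direct sum) with `W` a free submodule of rank 1,
then `f ∈ ⟨u₁,…,uₙ⟩ = ⟨f_{x₁}/D,…,f_{xₙ}/D⟩`. -/
theorem stmt8 (K : Type*) [Field K] [Algebra K ℂ]
    (n : ℕ) (hn : 2 ≤ n)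
    (f : MvPolynomial (Fin n) K) (hf : f ≠ 0)
    (hder : ¬ ∀ j, pderiv j f = 0)
    (D : MvPolynomial (Fin n) K) (u : Fin n → MvPolynomial (Fin n) K)
    (hu : ∀ j, pderiv j f = D * u j)
    (hgcd : ∀ e : MvPolynomial (Fin n) K, (∀ j, e ∣ pderiv j f) → e ∣ D)
    (W : Submodule (MvPolynomial (Fin n) K) (Fin n → MvPolynomial (Fin n) K))
    (hfreeW : Module.Free (MvPolynomial (Fin n) K) W)
    (hrankW : Module.rank (MvPolynomial (Fin n) K) W = 1)
    (hsup : Vf0 f ⊔ W = Vf f)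
    (hinf : Vf0 f ⊓ W = ⊥) :
    f ∈ Ideal.span (Set.range u) :=
  stmt8_general K n f hf hder D u hu hgcd W hfreeW hrankW hsup
end

section
/- Let n ≥ 2 and let f ∈ K[x₁,…,xₙ] be a nonzero polynomial. Let X_j = (P_{j1},…,P_{jn}) ∈ V_f⁰ for j = 1,…,n−1, let M be the n×(n−1) matrix with entries M_{m,j} = P_{jm}, and let M_j denote the (n−1)×(n−1) minor of M obtained by deleting the j-th row. Assume: (1) there is an ideal I of K[x₁,…,xₙ] whose quotient ring K[x₁,…,xₙ]/I has Krull dimension at most n−2 such that for every point p ∈ Kⁿ outside the zero set of I, the scalar matrix M(p) has rank n−1; (2) every common divisor of M₁,…,Mₙ in K[x₁,…,xₙ] is a nonzero constant; (3) f = ∑_{m=1}^n Q_m f_{x_m} for some Q₁,…,Qₙ ∈ K[x₁,…,xₙ]. Then the K[x₁,…,xₙ]-module V_f is freely generated by X₁,…,X_{n−1} together with X_* = (Q₁,…,Qₙ). -/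
/-!
Write `∇f = (f_{x₁},…,f_{xₙ})`. A field `P ∈ V_f` with cofactor `k` satisfies
`(P - k Q) · ∇f = k f - k f = 0`, so everything reduces to showing that `X₁,…,X_{n-1}`
span the syzygies of `∇f` over `K[x]`. Over the fraction field this is linear algebra:
some minor `M_i` is nonzero, so the `X_j` are independent and span the hyperplane `∇f^⊥`.
The coefficients of a syzygy are then given by Cramer's rule with denominator `M_i` for
every `i`, so the reduced denominator divides all minors and is a unit. Uniqueness
follows by dotting with `∇f`, which isolates the coefficient of `Q` as a multiple of
`f ≠ 0`.
-/

open MvPolynomial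

/-- The increasing embedding `Fin (n-1) → Fin n` skipping `j`: used to delete
the `j`-th row of a matrix. -/
def deleteRow {n : ℕ} (j : Fin n) (a : Fin (n - 1)) : Fin n :=
  if h : (a : ℕ) < (j : ℕ) then
    ⟨a, by have := j.isLt; omega⟩
  else
    ⟨a + 1, by have := a.isLt; omega⟩

open Matrix

section Minors

variable {R : Type*} [CommRing R] {n : ℕ}

/-- The matrix with columns `X j` and row `i` deleted; its determinant is the minor `M_i`. -/
def minorMatrix (X : Fin (n - 1) → Fin n → R) (i : Fin n) :
    Matrix (Fin (n - 1)) (Fin (n - 1)) R :=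
  Matrix.of fun a b => X b (deleteRow i a)

lemma minorMatrix_mulVec (X : Fin (n - 1) → Fin n → R) (i : Fin n) (c : Fin (n - 1) → R) :
    minorMatrix X i *ᵥ c = (∑ j, c j • X j) ∘ deleteRow i := by
  ext a
  simp [minorMatrix, mulVec, dotProduct, Finset.sum_apply, mul_comm]

lemma minorMatrix_map {S : Type*} [CommRing S] (φ : R →+* S)
    (X : Fin (n - 1) → Fin n → R) (i : Fin n) :
    (minorMatrix X i).map φ = minorMatrix (fun j m => φ (X j m)) i :=
  rfl

lemma linearIndependent_of_det_minorMatrix_ne_zero [NoZeroDivisors R]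
    {X : Fin (n - 1) → Fin n → R} {i : Fin n} (h : (minorMatrix X i).det ≠ 0) :
    LinearIndependent R X := by
  refine Fintype.linearIndependent_iffₛ.mpr fun c d hcd => congrFun ?_
  exact mulVec_injective_of_det_ne_zero h (by rw [minorMatrix_mulVec, minorMatrix_mulVec, hcd])

lemma exists_det_minorMatrix_ne_zero [Nontrivial R] {X : Fin (n - 1) → Fin n → R}
    (hminor : ∀ e, (∀ i, e ∣ (minorMatrix X i).det) → IsUnit e) :
    ∃ i, (minorMatrix X i).det ≠ 0 := by
  by_contra! h
  exact not_isUnit_zero (hminor 0 fun i => by rw [h i])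

end Minors

lemma mem_span_of_dotProduct_eq_zero {F ι η : Type*} [Field F] [Fintype ι] [Fintype η]
    (hcard : Fintype.card η ≤ Fintype.card ι + 1) {X : ι → η → F} (hX : LinearIndependent F X)
    {g : η → F} (hg : g ≠ 0) (hXg : ∀ j, X j ⬝ᵥ g = 0) {y : η → F} (hy : y ⬝ᵥ g = 0) :
    y ∈ Submodule.span F (Set.range X) := by
  classical
  let G := (dotProductBilin F F).flip g
  have hG : LinearMap.range G ≠ ⊥ := by
    rw [Ne, LinearMap.range_eq_bot]
    intro h
    refine hg (funext fun m => ?_)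
    simpa [G, dotProduct_single] using LinearMap.congr_fun h (Pi.single m 1)
  have hker : Module.finrank F (LinearMap.ker G) ≤ Fintype.card ι := by
    have hrange := Submodule.one_le_finrank_iff.mpr hG
    have := G.finrank_range_add_finrank_ker
    rw [Module.finrank_fintype_fun_eq_card] at this
    omega
  have hspan : Submodule.span F (Set.range X) = LinearMap.ker G := by
    refine Submodule.eq_of_le_of_finrank_le ?_ (by rwa [finrank_span_eq_card hX])
    rw [Submodule.span_le]
    rintro _ ⟨j, rfl⟩
    exact hXg j
  rw [hspan]
  exact hy

section FractionRing

open IsLocalization IsFractionRing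

variable {A K : Type*} [CommRing A] [Field K] [Algebra A K]

lemma isInteger_det_mul_of_mulVec_eq {ι : Type*} [Fintype ι] [DecidableEq ι]
    (M : Matrix ι ι A) {c : ι → K} {b : ι → A}
    (h : M.map (algebraMap A K) *ᵥ c = algebraMap A K ∘ b) (j : ι) :
    IsInteger A (algebraMap A K M.det * c j) := by
  refine ⟨(M.adjugate *ᵥ b) j, ?_⟩
  have hadj : M.adjugate.map (algebraMap A K) = (M.map (algebraMap A K)).adjugate :=
    (algebraMap A K).map_adjugate M
  rw [RingHom.map_mulVec, hadj, ← h, mulVec_mulVec, adjugate_mul, smul_mulVec, one_mulVec,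
    Pi.smul_apply, smul_eq_mul, (algebraMap A K).map_det]
  rfl

lemma isInteger_of_forall_isInteger_mul [IsDomain A] [UniqueFactorizationMonoid A]
    [IsFractionRing A K] {ι : Type*}
    {d : ι → A} (hd : ∀ e, (∀ i, e ∣ d i) → IsUnit e) {x : K}
    (hx : ∀ i, IsInteger A (algebraMap A K (d i) * x)) : IsInteger A x := by
  refine isInteger_of_isUnit_den (hd _ fun i => ?_)
  obtain ⟨r, hr⟩ := hx i
  refine (num_den_reduced A x).symm.dvd_of_dvd_mul_left ⟨r, ?_⟩
  apply IsFractionRing.injective A K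
  rw [map_mul, map_mul, hr, ← num_mul_den_eq_num_iff_eq.mpr rfl]
  ring

end FractionRing

theorem exists_eq_sum_smul_of_dotProduct_eq_zero {R : Type*} [CommRing R] [IsDomain R]
    [UniqueFactorizationMonoid R] {n : ℕ} {X : Fin (n - 1) → Fin n → R}
    (hminor : ∀ e, (∀ i, e ∣ (minorMatrix X i).det) → IsUnit e)
    {g : Fin n → R} (hg : g ≠ 0) (hXg : ∀ j, X j ⬝ᵥ g = 0) {y : Fin n → R} (hy : y ⬝ᵥ g = 0) :
    ∃ c : Fin (n - 1) → R, y = ∑ j, c j • X j := by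
  let φ := algebraMap R (FractionRing R)
  have hφ : Function.Injective φ := IsFractionRing.injective R (FractionRing R)
  obtain ⟨i₀, hi₀⟩ := exists_det_minorMatrix_ne_zero hminor
  have hli : LinearIndependent (FractionRing R) fun j m => φ (X j m) := by
    refine linearIndependent_of_det_minorMatrix_ne_zero (i := i₀) ?_
    rw [← minorMatrix_map, ← RingHom.mapMatrix_apply, ← RingHom.map_det]
    exact (map_ne_zero_iff φ hφ).mpr hi₀
  have hgφ : φ ∘ g ≠ 0 := fun h => hg (funext fun m => hφ (by simpa using congrFun h m))
  have hmem : φ ∘ y ∈ Submodule.span (FractionRing R) (Set.range fun j m => φ (X j m)) := by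
    refine mem_span_of_dotProduct_eq_zero (by simp only [Fintype.card_fin]; omega) hli hgφ
      (fun j => ?_) ?_
    · change (φ ∘ X j) ⬝ᵥ (φ ∘ g) = 0
      rw [← RingHom.map_dotProduct, hXg, map_zero]
    · rw [← RingHom.map_dotProduct, hy, map_zero]
  obtain ⟨c', hc'⟩ := (Submodule.mem_span_range_iff_exists_fun (FractionRing R)).mp hmem
  have hint : ∀ j, IsLocalization.IsInteger R (c' j) := fun j =>
    isInteger_of_forall_isInteger_mul hminor fun i =>
      isInteger_det_mul_of_mulVec_eq (minorMatrix X i) (b := y ∘ deleteRow i)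
        (by rw [minorMatrix_map, minorMatrix_mulVec, hc']; rfl) j
  choose c hc using hint
  refine ⟨c, funext fun m => hφ ?_⟩
  have hm := congrFun hc' m
  simp only [Finset.sum_apply, Pi.smul_apply, smul_eq_mul, ← hc] at hm
  simp only [Finset.sum_apply, Pi.smul_apply, smul_eq_mul, map_sum, map_mul]
  exact hm.symm

lemma eq_of_sum_smul_add_smul_eq {R ι η : Type*} [CommRing R] [NoZeroDivisors R] [Fintype ι]
    [Fintype η] {X : ι → η → R} (hX : LinearIndependent R X) {g Q : η → R}
    (hXg : ∀ j, X j ⬝ᵥ g = 0) (hQg : Q ⬝ᵥ g ≠ 0) {c d : ι → R} {a b : R}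
    (h : ∑ j, c j • X j + a • Q = ∑ j, d j • X j + b • Q) : c = d ∧ a = b := by
  have hdot : ∀ (c : ι → R) (a : R), (∑ j, c j • X j + a • Q) ⬝ᵥ g = a * (Q ⬝ᵥ g) := by
    intro c a
    simp [add_dotProduct, sum_dotProduct, smul_dotProduct, hXg]
  obtain rfl : a = b := mul_right_cancel₀ hQg (by rw [← hdot c, ← hdot d, h])
  exact ⟨funext (Fintype.linearIndependent_iffₛ.mp hX c d (add_right_cancel h)), rfl⟩

theorem stmt9_general (K : Type*) [Field K]
    (n : ℕ)
    (f : MvPolynomial (Fin n) K) (hf : f ≠ 0)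
    (X : Fin (n - 1) → Fin n → MvPolynomial (Fin n) K)
    (hX : ∀ j, X j ∈ Vf0 f)
    (h2 : ∀ e : MvPolynomial (Fin n) K,
      (∀ j : Fin n,
        e ∣ (Matrix.of fun a b : Fin (n - 1) => X b (deleteRow j a)).det) →
      ∃ c : K, c ≠ 0 ∧ e = C c)
    (Q : Fin n → MvPolynomial (Fin n) K)
    (h3 : f = ∑ m, Q m * pderiv m f) :
    ∀ P ∈ Vf f,
      ∃! c : (Fin (n - 1) → MvPolynomial (Fin n) K) × MvPolynomial (Fin n) K,
        P = (∑ j, c.1 j • X j) + c.2 • Q := by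
  rintro P ⟨k, hk⟩
  let g : Fin n → MvPolynomial (Fin n) K := fun m => pderiv m f
  have hXg : ∀ j, X j ⬝ᵥ g = 0 := hX
  have hQg : Q ⬝ᵥ g = f := h3.symm
  have hg : g ≠ 0 := fun hg => hf (by rw [← hQg, hg, dotProduct_zero])
  have hminor : ∀ e, (∀ i, e ∣ (minorMatrix X i).det) → IsUnit e := fun e he => by
    obtain ⟨c, hc, rfl⟩ := h2 e he
    exact hc.isUnit.map C
  have hPg : (P - k • Q) ⬝ᵥ g = 0 := by
    rw [sub_dotProduct, smul_dotProduct, hQg, smul_eq_mul, sub_eq_zero]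
    exact hk
  obtain ⟨c, hc⟩ := exists_eq_sum_smul_of_dotProduct_eq_zero hminor hg hXg hPg
  obtain ⟨i₀, hi₀⟩ := exists_det_minorMatrix_ne_zero hminor
  have hli := linearIndependent_of_det_minorMatrix_ne_zero hi₀
  have hP : P = ∑ j, c j • X j + k • Q := by rw [← hc, sub_add_cancel]
  refine ⟨(c, k), hP, ?_⟩
  rintro ⟨d, e⟩ hde
  obtain ⟨rfl, rfl⟩ := eq_of_sum_smul_add_smul_eq hli hXg (hQg.symm ▸ hf) (hde.symm.trans hP)
  rfl

/-- Let `n ≥ 2`, `f ∈ K[x₁,…,xₙ]` nonzero, and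
`X₁,…,X_{n-1} ∈ V_f⁰` with coefficient matrix `M` (`M_{m,j} = P_{jm}`) and
minors `M_j` (delete the `j`-th row). Assume (1) there is an ideal `I` with
`dim K[x]/I ≤ n-2` such that `M(p)` has rank `n-1` at every `p ∈ Kⁿ` outside
the zero set of `I`; (2) every common divisor of `M₁,…,Mₙ` is a nonzero
constant; (3) `f = ∑ Q_m f_{x_m}`. Then `V_f` is freely generated by
`X₁,…,X_{n-1}` together with `X_* = (Q₁,…,Qₙ)`. -/
theorem stmt9 (K : Type*) [Field K] [Algebra K ℂ]
    (n : ℕ) (hn : 2 ≤ n)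
    (f : MvPolynomial (Fin n) K) (hf : f ≠ 0)
    (X : Fin (n - 1) → Fin n → MvPolynomial (Fin n) K)
    (hX : ∀ j, X j ∈ Vf0 f)
    (h1 : ∃ I : Ideal (MvPolynomial (Fin n) K),
      ringKrullDim (MvPolynomial (Fin n) K ⧸ I) ≤ (n - 2 : ℕ) ∧
      ∀ p : Fin n → K, (∃ g ∈ I, eval p g ≠ 0) →
        (Matrix.of fun (m : Fin n) (j : Fin (n - 1)) => eval p (X j m)).rank = n - 1)
    (h2 : ∀ e : MvPolynomial (Fin n) K,
      (∀ j : Fin n,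
        e ∣ (Matrix.of fun a b : Fin (n - 1) => X b (deleteRow j a)).det) →
      ∃ c : K, c ≠ 0 ∧ e = C c)
    (Q : Fin n → MvPolynomial (Fin n) K)
    (h3 : f = ∑ m, Q m * pderiv m f) :
    ∀ P ∈ Vf f,
      ∃! c : (Fin (n - 1) → MvPolynomial (Fin n) K) × MvPolynomial (Fin n) K,
        P = (∑ j, c.1 j • X j) + c.2 • Q :=
  stmt9_general K n f hf X hX h2 Q h3
end

section
/- Let n ≥ 2 and let f ∈ K[x₁,…,xₙ] be a nonzero polynomial. Let X_j = (P_{j1},…,P_{jn}) ∈ V_f⁰ for j = 1,…,n−1, let M be the n×(n−1) matrix with entries M_{m,j} = P_{jm}, and let M_j denote the (n−1)×(n−1) minor of M obtained by deleting the j-th row. Assume: (1) there is an ideal I of K[x₁,…,xₙ] whose quotient ring K[x₁,…,xₙ]/I has Krull dimension at most n−2 such that for every point p ∈ Kⁿ outside the zero set of I, the scalar matrix M(p) has rank n−1; (2) every common divisor of M₁,…,Mₙ in K[x₁,…,xₙ] is a nonzero constant; (3) f = ∑_{m=1}^n Q_m f_{x_m} for some Q₁,…,Qₙ ∈ K[x₁,…,xₙ],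 and set X_* = (Q₁,…,Qₙ). Then X₁,…,X_{n−1} freely generate the K[x₁,…,xₙ]-module V_f⁰, and V_f is the internal direct sum of V_f⁰ and the cyclic submodule generated by X_*. -/
open MvPolynomial

/-- Linear independence from a nonzero minor. -/
theorem indep_of_minor {F : Type*} [Field F] {n : ℕ}
    (x : Fin (n-1) → Fin n → F) (m₀ : Fin n)
    (h : (Matrix.of fun a b : Fin (n-1) => x b (deleteRow m₀ a)).det ≠ 0) :
    LinearIndependent F x := by
  classical
  rw [Fintype.linearIndependent_iff]
  intro d hd
  have hmv : (Matrix.of fun a b : Fin (n-1) => x b (deleteRow m₀ a)).mulVec d = 0 := by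
    funext a
    have := congrFun hd (deleteRow m₀ a)
    simpa [Matrix.mulVec, dotProduct, mul_comm] using this
  exact fun i => congrFun (Matrix.eq_zero_of_mulVec_eq_zero h hmv) i

/-- A vector orthogonal to a nonzero `g` lies in the span of `n-1`
independent vectors orthogonal to `g`. -/
theorem mem_span_of_orth {F : Type*} [Field F] {n : ℕ}
    (g : Fin n → F) (m₁ : Fin n) (hg : g m₁ ≠ 0)
    (x : Fin (n-1) → Fin n → F) (hx : ∀ b, ∑ m, x b m * g m = 0)
    (hindep : LinearIndependent F x)
    (p : Fin n → F) (hp : ∑ m, p m * g m = 0) :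
    ∃ c : Fin (n-1) → F, ∑ b, c b • x b = p := by
  classical
  let φ : (Fin n → F) →ₗ[F] F :=
    { toFun := fun v => ∑ m, v m * g m
      map_add' := by intro v w; simp [add_mul, Finset.sum_add_distrib]
      map_smul' := by intro c v; simp [Finset.mul_sum, mul_assoc] }
  have hφx : ∀ b, x b ∈ LinearMap.ker φ := fun b => hx b
  have hφp : p ∈ LinearMap.ker φ := hp
  have hφne : φ ≠ 0 := by
    intro h0
    have h1 : φ (Pi.single m₁ 1) = g m₁ := by
      simp only [φ, LinearMap.coe_mk, AddHom.coe_mk, Pi.single_apply]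
      rw [Finset.sum_eq_single m₁]
      · simp
      · intro b _ hb; simp [hb]
      · simp
    rw [h0] at h1
    exact hg (by simpa using h1.symm)
  have hspanle : Submodule.span F (Set.range x) ≤ LinearMap.ker φ := by
    rw [Submodule.span_le]; rintro _ ⟨b, rfl⟩; exact hφx b
  have hspan : Submodule.span F (Set.range x) = LinearMap.ker φ := by
    apply Submodule.eq_of_le_of_finrank_eq hspanle
    have hcard : Module.finrank F ↥(Submodule.span F (Set.range x)) = n - 1 := by
      rw [finrank_span_eq_card hindep, Fintype.card_fin]
    rw [hcard]
    have hrk := LinearMap.finrank_range_add_finrank_ker φ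
    rw [Module.finrank_fintype_fun_eq_card, Fintype.card_fin] at hrk
    have hr1 : 1 ≤ Module.finrank F ↥(LinearMap.range φ) := by
      rcases Nat.eq_zero_or_pos (Module.finrank F ↥(LinearMap.range φ)) with h | h
      · exfalso
        rw [Submodule.finrank_eq_zero, LinearMap.range_eq_bot] at h
        exact hφne h
      · exact h
    have hge : n - 1 ≤ Module.finrank F ↥(LinearMap.ker φ) := by
      rw [← hcard]; exact Submodule.finrank_mono hspanle
    omega
  have hpmem : p ∈ Submodule.span F (Set.range x) := by rw [hspan]; exact hφp
  rwa [Submodule.mem_span_range_iff_exists_fun] at hpmem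

set_option maxHeartbeats 1000000 in
theorem freeGen {K : Type*} [Field K] {n : ℕ} (hn : 1 ≤ n)
    (f : MvPolynomial (Fin n) K)
    (X : Fin (n-1) → Fin n → MvPolynomial (Fin n) K)
    (hX : ∀ j, ∑ m, X j m * pderiv m f = 0)
    (h2 : ∀ e : MvPolynomial (Fin n) K,
      (∀ j : Fin n, e ∣ (Matrix.of fun a b : Fin (n - 1) => X b (deleteRow j a)).det) →
      ∃ c : K, c ≠ 0 ∧ e = C c)
    (hG : ∃ m, pderiv m f ≠ 0)
    (P : Fin n → MvPolynomial (Fin n) K) (hP : ∑ m, P m * pderiv m f = 0) :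
    ∃! c : Fin (n-1) → MvPolynomial (Fin n) K, P = ∑ j, c j • X j := by
  classical
  let L := FractionRing (MvPolynomial (Fin n) K)
  let alg : MvPolynomial (Fin n) K →+* L := algebraMap _ L
  have hinj : Function.Injective alg := IsFractionRing.injective _ L
  -- some minor is nonzero
  have hA : ∃ m₀ : Fin n,
      (Matrix.of fun a b : Fin (n-1) => X b (deleteRow m₀ a)).det ≠ 0 := by
    by_contra h
    push_neg at h
    obtain ⟨c, hc, heq⟩ := h2 (MvPolynomial.X ⟨0, by omega⟩)
      (fun j => by rw [h j]; exact dvd_zero _)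
    have := congrArg totalDegree heq
    rw [totalDegree_X, totalDegree_C] at this
    exact one_ne_zero this
  obtain ⟨m₀, hm₀⟩ := hA
  -- vectors over the fraction field
  have hALdet : ∀ m : Fin n,
      (Matrix.of fun a b : Fin (n-1) => alg (X b (deleteRow m a))).det
        = alg (Matrix.of fun a b : Fin (n-1) => X b (deleteRow m a)).det := by
    intro m
    rw [RingHom.map_det]
    rfl
  have hindep : LinearIndependent L (fun b m => alg (X b m)) := by
    apply indep_of_minor _ m₀
    rw [show (Matrix.of fun a b : Fin (n-1) => (fun b m => alg (X b m)) b (deleteRow m₀ a))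
        = Matrix.of fun a b : Fin (n-1) => alg (X b (deleteRow m₀ a)) from rfl, hALdet]
    intro h
    exact hm₀ (hinj (by simpa using h))
  obtain ⟨m₁, hm₁⟩ := hG
  have hc : ∃ c : Fin (n-1) → L,
      ∑ b, c b • (fun m => alg (X b m)) = fun m => alg (P m) := by
    apply mem_span_of_orth (fun m => alg (pderiv m f)) m₁
    · exact fun h => hm₁ (hinj (by simpa using h))
    · intro b
      have := congrArg alg (hX b)
      simpa [map_sum] using this
    · exact hindep
    · have := congrArg alg hP
      simpa [map_sum] using this
  obtain ⟨c, hc⟩ := hc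
  -- each c j is (the image of) a polynomial
  have hcj : ∀ j, ∃ r : MvPolynomial (Fin n) K, alg r = c j := by
    intro j
    set N := IsFractionRing.num (MvPolynomial (Fin n) K) (c j) with hN
    set D := IsFractionRing.den (MvPolynomial (Fin n) K) (c j) with hD
    have hrel : IsRelPrime (D : MvPolynomial (Fin n) K) N :=
      (IsFractionRing.num_den_reduced (MvPolynomial (Fin n) K) (c j)).symm
    have hcd : alg N = c j * alg (D : MvPolynomial (Fin n) K) :=
      IsLocalization.mk'_eq_iff_eq_mul.mp (IsFractionRing.mk'_num_den (MvPolynomial (Fin n) K) (c j))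
    have hdvd : ∀ m : Fin n, (D : MvPolynomial (Fin n) K) ∣
        (Matrix.of fun a b : Fin (n-1) => X b (deleteRow m a)).det := by
      intro m
      set B : Matrix (Fin (n-1)) (Fin (n-1)) (MvPolynomial (Fin n) K) :=
        (Matrix.of fun a b : Fin (n-1) => X b (deleteRow m a)).updateCol j
          (fun a => P (deleteRow m a)) with hB
      have hmapB : B.map alg = (Matrix.of fun a b : Fin (n-1) =>
          alg (X b (deleteRow m a))).updateCol j
          (fun a => alg (P (deleteRow m a))) := by
        ext i k
        by_cases hk : k = j <;>
          simp [hB, Matrix.updateCol_apply, Matrix.map_apply, hk]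
      have hcol : (fun a : Fin (n-1) => alg (P (deleteRow m a))) =
          fun a => ∑ b, c b • (Matrix.of fun a b : Fin (n-1) =>
            alg (X b (deleteRow m a))) a b := by
        funext a
        have := congrFun hc (deleteRow m a)
        simpa [Finset.sum_apply, Pi.smul_apply, smul_eq_mul] using this.symm
      have hdet : alg B.det = c j *
          alg (Matrix.of fun a b : Fin (n-1) => X b (deleteRow m a)).det := by
        have h1 : (B.map alg).det = c j • (Matrix.of fun a b : Fin (n-1) =>
            alg (X b (deleteRow m a))).det := by
          rw [hmapB, hcol]
          exact Matrix.det_updateCol_sum _ j c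
        have h2' : (B.map alg).det = alg B.det := by rw [RingHom.map_det]; rfl
        rw [h2', hALdet m] at h1
        rw [h1, smul_eq_mul]
      have heqR : B.det * (D : MvPolynomial (Fin n) K) =
          N * (Matrix.of fun a b : Fin (n-1) => X b (deleteRow m a)).det := by
        apply hinj
        rw [map_mul, map_mul, hdet, hcd]; ring
      exact hrel.dvd_of_dvd_mul_left ⟨B.det, by rw [← heqR]; ring⟩
    obtain ⟨c0, hc0, hDc⟩ := h2 _ hdvd
    have hDunit : IsUnit (D : MvPolynomial (Fin n) K) := by
      rw [hDc]; exact hc0.isUnit.map C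
    obtain ⟨u, hu⟩ := hDunit
    refine ⟨(↑u⁻¹ : MvPolynomial (Fin n) K) * N, ?_⟩
    have hDne : alg (D : MvPolynomial (Fin n) K) ≠ 0 := fun h =>
      nonZeroDivisors.coe_ne_zero D (hinj (by simpa using h))
    apply mul_right_cancel₀ hDne
    rw [← map_mul, mul_assoc, mul_comm N (D : MvPolynomial (Fin n) K), ← mul_assoc,
      ← hu, Units.inv_mul, one_mul, hcd, hu]
  choose r hr using hcj
  have hPr : P = ∑ j, r j • X j := by
    funext m
    apply hinj
    have := congrFun hc m
    simp only [Finset.sum_apply, Pi.smul_apply, smul_eq_mul] at this ⊢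
    rw [map_sum, ← this]
    exact Finset.sum_congr rfl fun b _ => by rw [map_mul, hr b]
  refine ⟨r, hPr, ?_⟩
  intro d hd
  funext j
  have hsum : ∑ b, (d b - r b) • X b = 0 := by
    have h1 := hPr.symm.trans hd
    calc ∑ b, (d b - r b) • X b = (∑ b, d b • X b) - ∑ b, r b • X b := by
          rw [← Finset.sum_sub_distrib]
          exact Finset.sum_congr rfl fun b _ => by rw [sub_smul]
      _ = 0 := by rw [← h1]; abel
  have hmapped : ∑ b, alg (d b - r b) • (fun m => alg (X b m)) = 0 := by
    funext m
    have := congrFun hsum m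
    simp only [Finset.sum_apply, Pi.smul_apply, smul_eq_mul, Pi.zero_apply] at this ⊢
    rw [show (0:L) = alg 0 by simp, ← this, map_sum]
    exact Finset.sum_congr rfl fun b _ => by rw [map_mul]
  have h0 := Fintype.linearIndependent_iff.mp hindep _ hmapped j
  have : d j - r j = 0 := hinj (by simpa using h0)
  exact (sub_eq_zero.mp this)

/-- Under the same hypotheses as Statement 9 (with
`X_* = (Q₁,…,Qₙ)` coming from a decomposition `f = ∑ Q_m f_{x_m}`),
the fields `X₁,…,X_{n-1}` freely generate `V_f⁰`, and `V_f` is the internal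
direct sum of `V_f⁰` and the cyclic submodule generated by `X_*`. -/
theorem stmt10 (K : Type*) [Field K] [Algebra K ℂ]
    (n : ℕ) (hn : 2 ≤ n)
    (f : MvPolynomial (Fin n) K) (hf : f ≠ 0)
    (X : Fin (n - 1) → Fin n → MvPolynomial (Fin n) K)
    (hX : ∀ j, X j ∈ Vf0 f)
    (h1 : ∃ I : Ideal (MvPolynomial (Fin n) K),
      ringKrullDim (MvPolynomial (Fin n) K ⧸ I) ≤ (n - 2 : ℕ) ∧
      ∀ p : Fin n → K, (∃ g ∈ I, eval p g ≠ 0) →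
        (Matrix.of fun (m : Fin n) (j : Fin (n - 1)) => eval p (X j m)).rank = n - 1)
    (h2 : ∀ e : MvPolynomial (Fin n) K,
      (∀ j : Fin n,
        e ∣ (Matrix.of fun a b : Fin (n - 1) => X b (deleteRow j a)).det) →
      ∃ c : K, c ≠ 0 ∧ e = C c)
    (Q : Fin n → MvPolynomial (Fin n) K)
    (h3 : f = ∑ m, Q m * pderiv m f) :
    (∀ P ∈ Vf0 f,
      ∃! c : Fin (n - 1) → MvPolynomial (Fin n) K, P = ∑ j, c j • X j) ∧
    Vf0 f ⊔ Submodule.span (MvPolynomial (Fin n) K) {Q} = Vf f ∧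
    Vf0 f ⊓ Submodule.span (MvPolynomial (Fin n) K) {Q} = ⊥ := by
  classical
  have hX' : ∀ j, ∑ m, X j m * pderiv m f = 0 := fun j => hX j
  have hG : ∃ m, pderiv m f ≠ 0 := by
    by_contra h
    push_neg at h
    apply hf
    rw [h3]
    simp [h]
  refine ⟨?_, ?_, ?_⟩
  · intro P hP
    exact freeGen (by omega) f X hX' h2 hG P hP
  · apply le_antisymm
    · apply sup_le
      · intro P hP
        exact ⟨0, by rw [show ∑ j, P j * pderiv j f = 0 from hP, zero_mul]⟩
      · rw [Submodule.span_le, Set.singleton_subset_iff]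
        exact ⟨1, by rw [← h3, one_mul]⟩
    · rintro P ⟨k, hk⟩
      have h0 : P - k • Q ∈ Vf0 f := by
        show ∑ j, (P - k • Q) j * pderiv j f = 0
        simp only [Pi.sub_apply, Pi.smul_apply, smul_eq_mul, sub_mul,
          Finset.sum_sub_distrib]
        rw [hk, show ∑ j, k * Q j * pderiv j f = k * ∑ j, Q j * pderiv j f by
          rw [Finset.mul_sum]; exact Finset.sum_congr rfl fun j _ => by ring]
        rw [← h3, sub_self]
      have hrw : P = (P - k • Q) + k • Q := by abel
      rw [hrw]
      exact Submodule.add_mem _ (Submodule.mem_sup_left h0)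
        (Submodule.mem_sup_right
          (Submodule.smul_mem _ k (Submodule.mem_span_singleton_self Q)))
  · rw [eq_bot_iff]
    rintro P hP
    rw [Submodule.mem_inf] at hP
    obtain ⟨hP0, hPs⟩ := hP
    rw [Submodule.mem_span_singleton] at hPs
    obtain ⟨a, ha⟩ := hPs
    have h0 : ∑ j, (a • Q) j * pderiv j f = 0 := by
      rw [ha]; exact hP0
    have haf : a * f = 0 := by
      rw [h3, Finset.mul_sum, ← h0]
      exact Finset.sum_congr rfl fun j _ => by
        simp [Pi.smul_apply, smul_eq_mul, mul_assoc]
    have ha0 : a = 0 := by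
      rcases mul_eq_zero.mp haf with h | h
      · exact h
      · exact absurd h hf
    rw [Submodule.mem_bot, ← ha, ha0, zero_smul]
end

section
/- Let n ≥ 2, let g ∈ K[x₂,…,xₙ] be an arbitrary polynomial, and set f = x₁ + g(x₂,…,xₙ) ∈ K[x₁,…,xₙ]. Then the K[x₁,…,xₙ]-module V_f is freely generated by the n vector fields X_j = −(∂g/∂x_j)·e₁ + e_j for j = 2,…,n (where e_m denotes the m-th standard basis tuple of K[x₁,…,xₙ]ⁿ) together with X_* = f·e₁. -/
open MvPolynomial

/-- The `m`-th standard basis tuple `e_m` of `K[x₁,…,xₙ]ⁿ`. -/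
noncomputable def stdTuple {K : Type*} [Field K] {n : ℕ} (i : Fin n) :
    Fin n → MvPolynomial (Fin n) K :=
  Pi.single i 1

/-- Let `n ≥ 2`, let `g ∈ K[x₂,…,xₙ]` (a polynomial in
`K[x₁,…,xₙ]` not involving the first variable `x₁`), and set `f = x₁ + g`.
Then `V_f` is freely generated by the `n` vector fields
`X_j = -(∂g/∂x_j)·e₁ + e_j` for `j ≠ 1` together with `X_* = f·e₁`. -/
theorem stmt11 (K : Type*) [Field K] [Algebra K ℂ]
    (n : ℕ) (hn : 2 ≤ n)
    (g : MvPolynomial (Fin n) K)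
    (hg : g ∈ MvPolynomial.supported K {i : Fin n | i ≠ ⟨0, by omega⟩}) :
    ∀ P ∈ Vf (X (⟨0, by omega⟩ : Fin n) + g),
      ∃! c : ({j : Fin n // j ≠ ⟨0, by omega⟩} → MvPolynomial (Fin n) K) ×
          MvPolynomial (Fin n) K,
        P = (∑ j : {j : Fin n // j ≠ ⟨0, by omega⟩},
              c.1 j • ((-(pderiv (j : Fin n) g)) • stdTuple (⟨0, by omega⟩ : Fin n) +
                stdTuple (j : Fin n))) +
            c.2 • ((X (⟨0, by omega⟩ : Fin n) + g) • stdTuple (⟨0, by omega⟩ : Fin n)) := by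
  intro P hP
  obtain ⟨k, hk⟩ := hP
  set i0 : Fin n := ⟨0, by omega⟩ with hi0
  set f : MvPolynomial (Fin n) K := X i0 + g with hf
  have hg0 : pderiv i0 g = 0 := by
    apply pderiv_eq_zero_of_notMem_vars
    intro h
    have := MvPolynomial.mem_supported.mp hg h
    simp at this
  have hpd0 : pderiv i0 f = 1 := by simp [hf, hg0]
  have hfne : f ≠ 0 := by
    intro h
    rw [h] at hpd0
    simp at hpd0
  have hpdj : ∀ j : Fin n, j ≠ i0 → pderiv j f = pderiv j g := by
    intro j hj
    simp [hf, Pi.single_eq_of_ne (Ne.symm hj)]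
  -- key: value of the expression at a coordinate
  have key : ∀ (c1 : {j : Fin n // j ≠ i0} → MvPolynomial (Fin n) K)
      (c2 : MvPolynomial (Fin n) K) (i : Fin n),
      ((∑ j : {j : Fin n // j ≠ i0},
          c1 j • ((-(pderiv (j : Fin n) g)) • stdTuple i0 + stdTuple (j : Fin n))) +
        c2 • (f • stdTuple i0) : Fin n → MvPolynomial (Fin n) K) i
      = if h : i = i0 then (∑ j : {j : Fin n // j ≠ i0}, c1 j * (-(pderiv (j : Fin n) g)))
          + c2 * f else c1 ⟨i, h⟩ := by
    intro c1 c2 i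
    simp only [Pi.add_apply, Finset.sum_apply, Pi.smul_apply, smul_eq_mul, stdTuple]
    by_cases h : i = i0
    · subst h
      rw [dif_pos rfl]
      refine congrArg₂ (· + ·) (Finset.sum_congr rfl fun j _ => ?_)
        (by rw [Pi.single_eq_same, mul_one])
      rw [Pi.single_eq_same, Pi.single_eq_of_ne (Ne.symm j.2), mul_one, add_zero]
    · rw [dif_neg h, Pi.single_eq_of_ne h]
      rw [Finset.sum_eq_single (⟨i, h⟩ : {j : Fin n // j ≠ i0})]
      · simp
      · intro b _ hb
        rw [Pi.single_eq_of_ne (fun hh : i = (b : Fin n) => hb (Subtype.ext hh.symm))]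
        ring
      · intro hb; exact absurd (Finset.mem_univ _) hb
  -- the cofactor equation, rewritten
  have hsplit : P i0 + ∑ j : {j : Fin n // j ≠ i0}, P j * pderiv (j : Fin n) g = k * f := by
    have := hk
    rw [← Finset.add_sum_erase _ _ (Finset.mem_univ i0)] at this
    rw [hpd0, mul_one] at this
    rw [← this]
    congr 1
    rw [show (∑ x ∈ Finset.univ.erase i0, P x * pderiv x f)
        = ∑ x ∈ Finset.univ.erase i0, P x * pderiv x g from
      Finset.sum_congr rfl fun j hj => by rw [hpdj j (Finset.mem_erase.mp hj).1]]
    exact (Finset.sum_subtype (p := fun j : Fin n => j ≠ i0) (Finset.univ.erase i0)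
      (fun x => by simp [Finset.mem_erase]) (fun j => P j * pderiv j g)).symm
  refine ⟨⟨fun j => P j, k⟩, ?_, ?_⟩
  · funext i
    rw [key]
    split
    · rename_i h
      subst h
      have : ∑ j : {j : Fin n // j ≠ i0}, P (j:Fin n) * (-(pderiv (j : Fin n) g))
          = -∑ j : {j : Fin n // j ≠ i0}, P (j:Fin n) * pderiv (j : Fin n) g := by
        rw [← Finset.sum_neg_distrib]
        exact Finset.sum_congr rfl fun j _ => by ring
      rw [this]
      linear_combination hsplit
    · rfl
  · rintro ⟨c1, c2⟩ h
    have h1 : ∀ j : {j : Fin n // j ≠ i0}, c1 j = P (j : Fin n) := by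
      intro j
      have := congrFun h (j : Fin n)
      rw [key] at this
      rw [dif_neg j.2] at this
      simp [this]
    have h0 := congrFun h i0
    rw [key, dif_pos rfl] at h0
    have hc2 : c2 * f = k * f := by
      have hs : ∑ j : {j : Fin n // j ≠ i0}, c1 j * (-(pderiv (j : Fin n) g))
          = -∑ j : {j : Fin n // j ≠ i0}, P (j:Fin n) * pderiv (j : Fin n) g := by
        rw [← Finset.sum_neg_distrib]
        exact Finset.sum_congr rfl fun j _ => by rw [h1 j]; ring
      rw [hs] at h0
      linear_combination hsplit - h0
    have : c2 = k := mul_right_cancel₀ hfne hc2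
    have hfst : c1 = fun j => P j.1 := funext fun j => h1 j
    rw [Prod.ext_iff]
    exact ⟨hfst, this⟩
end
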